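/- arXiv:1712.02452 — 5 statements merged into one kernel-verified Lean document; each statement's English description precedes it below -/
import Mathlib

section
/- Let n ≥ 3 and let C be a relative interaction matrix having star topology with center node 1. Then the set of fixed points of the single-timescale DeGroot–Friedkin map F in Δⁿ is exactly the set of vertices {e_1, …, e_n}; i.e., x ∈ Δⁿ satisfies F(x) = x if and only if x = e_i for some i. -/
/-- The simplex Δⁿ = {x ∈ ℝⁿ : xᵢ ≥ 0, ∑ᵢ xᵢ = 1}. -/
def simplex (n : ℕ) : Set (Fin n → ℝ) :=
  {x | (∀ i, 0 ≤ x i) ∧ ∑ i, x i = 1}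

/-- The i-th vertex (standard basis vector) of the simplex. -/
def vertex (n : ℕ) (i : Fin n) : Fin n → ℝ := fun j => if j = i then 1 else 0

/-- A relative interaction matrix: nonnegative, row-stochastic, zero diagonal. -/
def IsRIM {n : ℕ} (C : Matrix (Fin n) (Fin n) ℝ) : Prop :=
  (∀ i j, 0 ≤ C i j) ∧ (∀ i, ∑ j, C i j = 1) ∧ (∀ i, C i i = 0)

/-- The single-timescale DeGroot–Friedkin map F(x) = Cᵀ(x − x²) + x². -/
noncomputable def DF {n : ℕ} (C : Matrix (Fin n) (Fin n) ℝ) (x : Fin n → ℝ) : Fin n → ℝ :=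
  fun i => ∑ j, C j i * (x j - (x j) ^ 2) + (x i) ^ 2

/-- C has star topology with center node c: C_{jc} = 1 and C_{cj} > 0 for all j ≠ c. -/
def StarCenter {n : ℕ} (C : Matrix (Fin n) (Fin n) ℝ) (c : Fin n) : Prop :=
  (∀ j, j ≠ c → C j c = 1) ∧ (∀ j, j ≠ c → 0 < C c j)

theorem stmt1 {n : ℕ} (hn : 3 ≤ n) (C : Matrix (Fin n) (Fin n) ℝ) (hC : IsRIM C)
    (hstar : StarCenter C ⟨0, by omega⟩) :
    ∀ x ∈ simplex n, (DF C x = x ↔ ∃ i, x = vertex n i) := by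
  obtain ⟨hCnn, hCrow, hCdiag⟩ := hC
  obtain ⟨hs1, hs2⟩ := hstar
  set c : Fin n := ⟨0, by omega⟩ with hc
  intro x hx
  obtain ⟨hxnn, hxsum⟩ := hx
  have hxle : ∀ i, x i ≤ 1 := by
    intro i
    calc x i ≤ ∑ j, x j := Finset.single_le_sum (fun j _ => hxnn j) (Finset.mem_univ i)
    _ = 1 := hxsum
  constructor
  · intro hfix
    -- off-star entries are zero
    have hC0 : ∀ j, j ≠ c → ∀ i, i ≠ c → C j i = 0 := by
      intro j hj i hi
      have h1 : ∑ k, C j k = 1 := hCrow j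
      have h2 : C j c = 1 := hs1 j hj
      have hsplit := Finset.sum_erase_add Finset.univ (C j) (Finset.mem_univ c)
      have h3 : ∑ k ∈ Finset.univ.erase c, C j k = 0 := by
        rw [h2] at hsplit; linarith [hsplit.trans h1]
      have := (Finset.sum_eq_zero_iff_of_nonneg (fun k _ => hCnn j k)).mp h3
      exact this i (Finset.mem_erase.mpr ⟨hi, Finset.mem_univ i⟩)
    -- fixed point equation at i ≠ c
    have heqi : ∀ i, i ≠ c → C c i * (x c - (x c)^2) = x i - (x i)^2 := by
      intro i hi
      have h := congrFun hfix i
      unfold DF at h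
      have hsum : ∑ j, C j i * (x j - (x j)^2) = C c i * (x c - (x c)^2) := by
        rw [Finset.sum_eq_single c]
        · intro j _ hj; rw [hC0 j hj i hi]; ring
        · intro h; exact absurd (Finset.mem_univ c) h
      rw [hsum] at h
      linarith
    -- fixed point equation at c
    have heqc : ∑ i ∈ Finset.univ.erase c, (x i - (x i)^2) = x c - (x c)^2 := by
      have h := congrFun hfix c
      unfold DF at h
      have hrw : ∑ j, C j c * (x j - (x j)^2)
          = ∑ j ∈ Finset.univ.erase c, (x j - (x j)^2) := by
        rw [← Finset.sum_erase_add _ _ (Finset.mem_univ c), hCdiag c]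
        rw [zero_mul, add_zero]
        apply Finset.sum_congr rfl
        intro j hj
        rw [hs1 j (Finset.mem_erase.mp hj).1, one_mul]
      rw [hrw] at h
      linarith
    by_cases hs : x c - (x c)^2 = 0
    · -- all coordinates are 0 or 1
      have h01 : ∀ i, x i = 0 ∨ x i = 1 := by
        intro i
        have hz : x i * (1 - x i) = 0 := by
          by_cases hi : i = c
          · subst hi; nlinarith
          · have := heqi i hi
            rw [hs, mul_zero] at this
            nlinarith
        rcases mul_eq_zero.mp hz with h | h
        · left; exact h
        · right; linarith
      have hex : ∃ i, x i = 1 := by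
        by_contra hno
        push_neg at hno
        have hall : ∀ i, x i = 0 := fun i => (h01 i).resolve_right (hno i)
        rw [Finset.sum_congr rfl (fun i _ => hall i)] at hxsum
        simp at hxsum
      obtain ⟨i, hi1⟩ := hex
      refine ⟨i, ?_⟩
      funext j
      unfold vertex
      by_cases hji : j = i
      · simp [hji, hi1]
      · simp only [hji, if_false]
        have hsplit := Finset.sum_erase_add Finset.univ x (Finset.mem_univ i)
        have hrest : ∑ k ∈ Finset.univ.erase i, x k = 0 := by
          rw [hi1] at hsplit; linarith [hsplit.trans hxsum]
        exact (Finset.sum_eq_zero_iff_of_nonneg (fun k _ => hxnn k)).mp hrest j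
          (Finset.mem_erase.mpr ⟨hji, Finset.mem_univ j⟩)
    · -- 0 < x c < 1 : contradiction
      exfalso
      have hsgn : 0 < x c - (x c)^2 := by
        have h0 : 0 ≤ x c * (1 - x c) := mul_nonneg (hxnn c) (by linarith [hxle c])
        have h1 : 0 ≤ x c - (x c)^2 := by nlinarith
        rcases lt_or_eq_of_le h1 with h | h
        · exact h
        · exact absurd h.symm hs
      have hpos : ∀ i, i ≠ c → 0 < x i := by
        intro i hi
        have h1 := heqi i hi
        have h2 : 0 < C c i := hs2 i hi
        nlinarith [hxle i, hxnn i]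
      set a : Fin n := ⟨1, by omega⟩ with ha
      set b : Fin n := ⟨2, by omega⟩ with hb
      have hac : a ≠ c := by simp [ha, hc, Fin.ext_iff]
      have hbc : b ≠ c := by simp [hb, hc, Fin.ext_iff]
      have hab : a ≠ b := by simp [ha, hb, Fin.ext_iff]
      set T := Finset.univ.erase c with hT
      set S := ∑ i ∈ T, x i with hS
      have haT : a ∈ T := Finset.mem_erase.mpr ⟨hac, Finset.mem_univ a⟩
      have hbT : b ∈ T := Finset.mem_erase.mpr ⟨hbc, Finset.mem_univ b⟩
      have hSx : S = 1 - x c := by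
        have hsplit := Finset.sum_erase_add Finset.univ x (Finset.mem_univ c)
        rw [hxsum] at hsplit
        rw [hS, hT]; linarith
      have hsq : ∑ i ∈ T, (x i)^2 = S^2 := by
        have h1 : ∑ i ∈ T, x i - ∑ i ∈ T, (x i)^2 = x c - (x c)^2 := by
          rw [← Finset.sum_sub_distrib]; exact heqc
        nlinarith [hSx]
      have hxiS : ∀ i ∈ T, x i ≤ S := fun i hi =>
        Finset.single_le_sum (fun j hj => hxnn j) hi
      have hxaS : x a < S := by
        have hsub : ({a, b} : Finset (Fin n)) ⊆ T := by
          intro k hk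
          rcases Finset.mem_insert.mp hk with h | h
          · exact h ▸ haT
          · exact (Finset.mem_singleton.mp h) ▸ hbT
        have := Finset.sum_le_sum_of_subset_of_nonneg hsub
          (fun k _ _ => hxnn k)
        rw [Finset.sum_pair hab] at this
        have := hpos b hbc
        linarith
      have hlt : ∑ i ∈ T, (x i)^2 < S^2 := by
        rw [← Finset.add_sum_erase T _ haT]
        have hxa := hpos a hac
        have h1 : (x a)^2 < x a * S := by nlinarith
        have h2 : ∑ i ∈ T.erase a, (x i)^2 ≤ ∑ i ∈ T.erase a, x i * S := by
          apply Finset.sum_le_sum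
          intro i hi
          have hiT := Finset.mem_of_mem_erase hi
          have h3 := hxiS i hiT
          nlinarith [hxnn i]
        have h3 : ∑ i ∈ T.erase a, x i * S = (S - x a) * S := by
          rw [← Finset.sum_mul]
          have := Finset.add_sum_erase T x haT
          have h4 : ∑ i ∈ T.erase a, x i = S - x a := by linarith
          rw [h4]
        nlinarith
      linarith
  · rintro ⟨i, rfl⟩
    funext j
    unfold DF vertex
    have hz : ∀ k : Fin n,
        ((if k = i then (1:ℝ) else 0) - (if k = i then (1:ℝ) else 0)^2) = 0 := by
      intro k; split <;> ring
    simp only [hz, mul_zero, Finset.sum_const_zero, zero_add]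
    split <;> ring
end

section
/- Let n ≥ 3 and let C be an irreducible relative interaction matrix that does not have star topology (there is no index i such that C_{ji} = 1 for all j ≠ i), and let c be the dominant left eigenvector of C. Then there exists a unique point x* in the interior of Δⁿ (all entries strictly positive) with F(x*) = x*; the set of fixed points of F in Δⁿ is exactly {e_1, …, e_n, x*}; and the ordering of the entries of x* equals the ordering of the entries of c, i.e., for all i, j: x*_i > x*_j if and only if c_i > c_j, and x*_i = x*_j if and only if c_i = c_j. -/
/-- A nonnegative matrix is irreducible if for all i ≠ j some power has positive (i,j) entry. -/
def Irred {n : ℕ} (C : Matrix (Fin n) (Fin n) ℝ) : Prop :=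
  ∀ i j : Fin n, i ≠ j → ∃ k, 1 ≤ k ∧ 0 < (C ^ k) i j

/-- C has star topology: some node i receives weight 1 from every other node. -/
def HasStarTopology {n : ℕ} (C : Matrix (Fin n) (Fin n) ℝ) : Prop :=
  ∃ i : Fin n, ∀ j, j ≠ i → C j i = 1

/-- c is the dominant left eigenvector of C: c ∈ Δⁿ and cᵀ C = cᵀ. -/
def DominantLeftEigenvector {n : ℕ} (C : Matrix (Fin n) (Fin n) ℝ) (c : Fin n → ℝ) : Prop :=
  c ∈ simplex n ∧ ∀ j, ∑ i, c i * C i j = c j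

/-!
A point `x` of the simplex is fixed by `F` iff `x - x²` is a left eigenvector of `C` for the
eigenvalue `1`. For irreducible `C` these eigenvectors are the multiples of `c`, so fixed points are
exactly the solutions of `x i * (1 - x i) = t * c i`. For `t = 0` these are the vertices. For
`t > 0` all coordinates are positive and, as `n ≥ 3`, any two of them sum to less than `1`; on such
pairs `u ↦ u * (1 - u)` is strictly monotone, which orders `x` like `c` and leaves at most one
coordinate on the large branch `u > 1/2`. Existence: fix the coordinate at a maximum of `c` and
apply the intermediate value theorem, using `c i < 1/2`, which is where the absence of a star
enters. Uniqueness: two solutions with parameters `s < t` are ruled out because, for the small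
root `φ`, the ratio `φ (t c) / φ (s c)` is strictly increasing in `c`.
-/

open Finset Matrix

lemma vecMul_pow_eq_self {ι R : Type*} [Fintype ι] [DecidableEq ι] [Semiring R]
    {C : Matrix ι ι R} {v : ι → R} (hv : v ᵥ* C = v) (k : ℕ) : v ᵥ* C ^ k = v := by
  induction k with
  | zero => simp
  | succ k ih => rw [pow_succ, ← vecMul_vecMul, ih, hv]

section Stationary

variable {n : ℕ} {C : Matrix (Fin n) (Fin n) ℝ}

lemma Irred.eq_zero_of_vecMul_eq_self (hirr : Irred C) (hC : ∀ i j, 0 ≤ C i j)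
    {w : Fin n → ℝ} (hw0 : ∀ i, 0 ≤ w i) (hw : w ᵥ* C = w) {j : Fin n} (hj : w j = 0)
    (i : Fin n) : w i = 0 := by
  rcases eq_or_ne i j with rfl | hij
  · exact hj
  obtain ⟨k, -, hk⟩ := hirr i j hij
  have hle : w i * (C ^ k) i j ≤ w j := by
    rw [← congrFun (vecMul_pow_eq_self hw k) j]
    exact single_le_sum (f := fun l => w l * (C ^ k) l j)
      (fun l _ => mul_nonneg (hw0 l) (pow_apply_nonneg hC k l j)) (mem_univ i)
  rw [hj] at hle
  nlinarith [hw0 i]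

lemma Irred.exists_eq_smul_of_vecMul_eq_self (hirr : Irred C) (hC : ∀ i j, 0 ≤ C i j)
    {c w : Fin n → ℝ} (hc0 : ∀ i, 0 < c i) (hc : c ᵥ* C = c) (hw : w ᵥ* C = w) :
    ∃ r : ℝ, w = r • c := by
  rcases isEmpty_or_nonempty (Fin n) with hn | hn
  · exact ⟨0, funext fun i => isEmptyElim i⟩
  -- With `r` the least ratio `w i / c i`, `w - r • c` is a nonnegative stationary vector
  -- vanishing at some entry.
  obtain ⟨j, hj⟩ := Finite.exists_min fun i => w i / c i
  set r := w j / c j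
  have hv0 : ∀ i, 0 ≤ (w - r • c) i := fun i => by
    have := (le_div_iff₀ (hc0 i)).1 (hj i)
    simp only [Pi.sub_apply, Pi.smul_apply, smul_eq_mul]
    linarith
  have hv : (w - r • c) ᵥ* C = w - r • c := by rw [sub_vecMul, smul_vecMul, hw, hc]
  have hvj : (w - r • c) j = 0 := by
    simp only [Pi.sub_apply, Pi.smul_apply, smul_eq_mul, r]
    field_simp [(hc0 j).ne']
    ring
  exact ⟨r, funext fun i => sub_eq_zero.1 (hirr.eq_zero_of_vecMul_eq_self hC hv0 hv hvj i)⟩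

lemma DominantLeftEigenvector.pos (hirr : Irred C) (hC : ∀ i j, 0 ≤ C i j) {c : Fin n → ℝ}
    (hc : DominantLeftEigenvector C c) (i : Fin n) : 0 < c i := by
  obtain ⟨⟨hc0, hc1⟩, hcC⟩ := hc
  obtain ⟨j, hj⟩ : ∃ j, c j ≠ 0 := by
    by_contra! h
    simp [h] at hc1
  exact (hc0 i).lt_of_ne fun hi =>
    hj (hirr.eq_zero_of_vecMul_eq_self hC hc0 (funext hcC) hi.symm j)

lemma DominantLeftEigenvector.lt_half (hC : IsRIM C) (hnostar : ¬ HasStarTopology C)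
    {c : Fin n → ℝ} (hc : DominantLeftEigenvector C c) (hc0 : ∀ i, 0 < c i) (i : Fin n) :
    c i < 1 / 2 := by
  obtain ⟨hC0, hC1, hCii⟩ := hC
  obtain ⟨⟨-, hc1⟩, hcC⟩ := hc
  have hterm : ∀ j, 0 ≤ c j * (1 - C j i) := fun j =>
    mul_nonneg (hc0 j).le (by linarith [single_le_sum (fun l _ => hC0 j l) (mem_univ i), hC1 j])
  have hsum : ∑ j ∈ univ.erase i, c j * (1 - C j i) = 1 - 2 * c i := by
    have hfull : ∑ j, c j * (1 - C j i) = 1 - c i := by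
      simp only [mul_one_sub, sum_sub_distrib, hc1, hcC i]
    rw [← add_sum_erase _ _ (mem_univ i), hCii] at hfull
    linarith
  by_contra! h
  refine hnostar ⟨i, fun j hj => ?_⟩
  have hzero := (sum_eq_zero_iff_of_nonneg fun j _ => hterm j).1
    (le_antisymm (by linarith) (sum_nonneg fun j _ => hterm j)) j (mem_erase.2 ⟨hj, mem_univ j⟩)
  linarith [(mul_eq_zero.1 hzero).resolve_left (hc0 j).ne']

lemma DF_eq_self_iff_vecMul_eq_self {x : Fin n → ℝ} :
    DF C x = x ↔ (fun i => x i - x i ^ 2) ᵥ* C = fun i => x i - x i ^ 2 := by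
  simp only [funext_iff, DF, vecMul, dotProduct]
  refine forall_congr' fun i => ?_
  simp only [mul_comm (x _ - x _ ^ 2)]
  constructor <;> intro h <;> linarith

lemma Irred.DF_eq_self_iff_exists (hirr : Irred C) (hC : ∀ i j, 0 ≤ C i j) {c : Fin n → ℝ}
    (hc0 : ∀ i, 0 < c i) (hc : c ᵥ* C = c) {x : Fin n → ℝ} :
    DF C x = x ↔ ∃ t, ∀ i, x i * (1 - x i) = t * c i := by
  rw [DF_eq_self_iff_vecMul_eq_self]
  constructor
  · intro h
    obtain ⟨t, ht⟩ := hirr.exists_eq_smul_of_vecMul_eq_self hC hc0 hc h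
    refine ⟨t, fun i => ?_⟩
    have hti := congrFun ht i
    simp only [Pi.smul_apply, smul_eq_mul] at hti
    linear_combination hti
  · rintro ⟨t, ht⟩
    have hz : (fun i => x i - x i ^ 2) = t • c := funext fun i => by
      simp only [Pi.smul_apply, smul_eq_mul]
      linear_combination ht i
    rw [hz, smul_vecMul, hc]

end Stationary

lemma exists_eq_vertex_of_mul_one_sub_eq_zero {n : ℕ} {x : Fin n → ℝ} (hx : x ∈ simplex n)
    (h : ∀ i, x i * (1 - x i) = 0) : ∃ i, x = vertex n i := by
  obtain ⟨i, hi⟩ : ∃ i, x i ≠ 0 := by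
    by_contra! h0
    simp [simplex, h0] at hx
  have hxi : x i = 1 := by linarith [(mul_eq_zero.1 (h i)).resolve_left hi]
  refine ⟨i, funext fun j => ?_⟩
  rcases eq_or_ne j i with rfl | hji
  · simp [vertex, hxi]
  · have hle := sum_le_univ_sum_of_nonneg (s := {i, j}) hx.1
    rw [sum_pair hji.symm, hx.2] at hle
    simp only [vertex, hji, if_false]
    rcases mul_eq_zero.1 (h j) with h | h <;> linarith

lemma lt_iff_mul_one_sub_lt {a b : ℝ} (h : a + b < 1) : a < b ↔ a * (1 - a) < b * (1 - b) := by
  constructor <;> intro hab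
  · nlinarith
  · by_contra! hba
    nlinarith

lemma eq_iff_mul_one_sub_eq {a b : ℝ} (h : a + b < 1) : a = b ↔ a * (1 - a) = b * (1 - b) := by
  constructor <;> intro hab
  · rw [hab]
  · have : (a - b) * (1 - a - b) = 0 := by linear_combination hab
    linarith [(mul_eq_zero.1 this).resolve_right (by linarith)]

lemma one_sub_mul_one_sub_lt {p q r w : ℝ} (hq : 0 ≤ q) (hr : 0 ≤ r) (hp : p < 1) (hw : w < 1)
    (hsq : p ^ 2 + w ^ 2 < q ^ 2 + r ^ 2)
    (hprod : (1 - p ^ 2) * (1 - w ^ 2) = (1 - q ^ 2) * (1 - r ^ 2)) :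
    (1 - q) * (1 - r) < (1 - p) * (1 - w) := by
  have hmul : p * w < q * r := lt_of_pow_lt_pow_left₀ 2 (by positivity) (by nlinarith)
  have hadd : p + w < q + r := lt_of_pow_lt_pow_left₀ 2 (by positivity) (by nlinarith)
  have hpw : 0 < (1 - p) * (1 - w) := mul_pos (by linarith) (by linarith)
  have hqr : 0 < (1 + q) * (1 + r) := by positivity
  refine lt_of_mul_lt_mul_right ?_ hqr.le
  calc (1 - q) * (1 - r) * ((1 + q) * (1 + r)) = (1 - p) * (1 - w) * ((1 + p) * (1 + w)) := by
        linear_combination -hprod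
    _ < (1 - p) * (1 - w) * ((1 + q) * (1 + r)) :=
        mul_lt_mul_of_pos_left (by nlinarith) hpw

lemma mul_lt_mul_of_mul_one_sub_eq {s t c c' u v a b : ℝ} (hs : 0 < s) (hst : s < t)
    (hc : 0 < c) (hcc' : c < c') (hu : u ≤ 1 / 2) (hv : v ≤ 1 / 2) (ha : a ≤ 1 / 2)
    (hb : b ≤ 1 / 2) (hut : u * (1 - u) = t * c) (hvs : v * (1 - v) = s * c)
    (hat : a * (1 - a) = t * c') (hbs : b * (1 - b) = s * c') : u * b < v * a := by
  have hv0 : 0 < v := by nlinarith [mul_pos hs hc]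
  have ha0 : 0 < a := by nlinarith [mul_pos (hs.trans hst) (hc.trans hcc')]
  have := one_sub_mul_one_sub_lt (p := 1 - 2 * v) (q := 1 - 2 * u) (r := 1 - 2 * b)
    (w := 1 - 2 * a) (by linarith) (by linarith) (by linarith) (by linarith)
    (by nlinarith [mul_pos (sub_pos.2 hst) (sub_pos.2 hcc')])
    (by linear_combination 16 * (a * (1 - a)) * hvs + 16 * (s * c) * hat
      - 16 * (b * (1 - b)) * hut - 16 * (t * c) * hbs)
  linarith

/-- The smaller root of `u * (1 - u) = x`. -/
noncomputable def smallRoot (x : ℝ) : ℝ := (1 - √(1 - 4 * x)) / 2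

lemma smallRoot_zero : smallRoot 0 = 0 := by simp [smallRoot]

lemma continuous_smallRoot : Continuous smallRoot := by
  unfold smallRoot
  fun_prop

lemma smallRoot_mul_one_sub {x : ℝ} (h : 4 * x ≤ 1) : smallRoot x * (1 - smallRoot x) = x := by
  have := Real.sq_sqrt (show 0 ≤ 1 - 4 * x by linarith)
  unfold smallRoot
  linear_combination -this / 4

lemma le_smallRoot {x : ℝ} (h : 4 * x ≤ 1) : x ≤ smallRoot x := by
  have : √(1 - 4 * x) ≤ 1 - 2 * x := Real.sqrt_le_iff.2 ⟨by linarith, by nlinarith [sq_nonneg x]⟩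
  unfold smallRoot
  linarith

section Profiles

variable {ι : Type*} {x y c : ι → ℝ}

lemma pairwise_add_lt_one [Fintype ι] (hcard : 2 < Fintype.card ι) (hx0 : ∀ i, 0 < x i)
    (hx1 : ∑ i, x i = 1) : Pairwise fun i j => x i + x j < 1 := by
  classical
  intro i j hij
  obtain ⟨m, -, hm⟩ := exists_mem_notMem_of_card_lt_card
    (s := {i, j}) (t := univ) ((card_le_two).trans_lt (by simpa using hcard))
  have := sum_lt_sum_of_subset (subset_univ {i, j}) (mem_univ m) hm (hx0 m) fun l _ _ => (hx0 l).le
  rwa [sum_pair hij, hx1] at this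

lemma lt_iff_lt_and_eq_iff_eq_of_mul_one_sub_eq_smul {t : ℝ} (ht : 0 < t)
    (hx : Pairwise fun i j => x i + x j < 1) (hxt : ∀ i, x i * (1 - x i) = t * c i) (i j : ι) :
    (x j < x i ↔ c j < c i) ∧ (x i = x j ↔ c i = c j) := by
  rcases eq_or_ne i j with rfl | hij
  · simp
  rw [lt_iff_mul_one_sub_lt (by linarith [hx hij]), eq_iff_mul_one_sub_eq (hx hij)]
  simp only [hxt]
  exact ⟨mul_lt_mul_iff_right₀ ht, mul_right_inj' ht.ne'⟩

lemma pos_of_mul_one_sub_eq_smul [Nontrivial ι] {t : ℝ} (hx0 : ∀ i, 0 < x i)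
    (hx : Pairwise fun i j => x i + x j < 1) (hc0 : ∀ i, 0 < c i)
    (hxt : ∀ i, x i * (1 - x i) = t * c i) : 0 < t := by
  obtain ⟨i, j, hij⟩ := exists_pair_ne ι
  have : 0 < t * c i := by
    rw [← hxt]
    exact mul_pos (hx0 i) (by linarith [hx hij, hx0 j])
  exact pos_of_mul_pos_left this (hc0 i).le

lemma eq_of_mul_one_sub_eq [Fintype ι] (hx : Pairwise fun i j => x i + x j < 1)
    (hy : Pairwise fun i j => y i + y j < 1) (hsum : ∑ i, x i = ∑ i, y i)
    (h : ∀ i, x i * (1 - x i) = y i * (1 - y i)) : x = y := by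
  by_contra hne
  obtain ⟨k, hk⟩ := Function.ne_iff.1 hne
  have hroot : ∀ i, x i = y i ∨ x i + y i = 1 := fun i => by
    have : (x i - y i) * (1 - x i - y i) = 0 := by linear_combination h i
    rcases mul_eq_zero.1 this with h | h
    · exact .inl (by linarith)
    · exact .inr (by linarith)
  have hxyk : x k + y k = 1 := (hroot k).resolve_left hk
  have hxy : ∀ j ≠ k, x j - y j = 0 := fun j hj =>
    sub_eq_zero.2 ((hroot j).resolve_right (by linarith [hx hj, hy hj]))
  have := Fintype.sum_eq_single k hxy
  rw [sum_sub_distrib, hsum, sub_self] at this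
  exact hk (by linarith)

lemma false_of_mul_one_sub_eq_smul_of_lt [Fintype ι] (hc : ∀ i, 0 < c i) {s t : ℝ} (hs : 0 < s)
    (hst : s < t) (hx : Pairwise fun i j => x i + x j < 1)
    (hy : Pairwise fun i j => y i + y j < 1) (hx1 : ∑ i, x i = 1) (hy1 : ∑ i, y i = 1)
    (hxt : ∀ i, x i * (1 - x i) = t * c i) (hys : ∀ i, y i * (1 - y i) = s * c i) : False := by
  classical
  have hxy : ∀ i, 0 < (x i - y i) * (1 - x i - y i) := fun i => by
    have : (x i - y i) * (1 - x i - y i) = (t - s) * c i := by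
      linear_combination hxt i - hys i
    rw [this]
    exact mul_pos (sub_pos.2 hst) (hc i)
  by_cases hk : ∃ k, 1 ≤ x k + y k
  swap
  · push Not at hk
    have : Nonempty ι := by
      by_contra h
      simp [not_nonempty_iff.1 h] at hx1
    have : ∑ i, y i < ∑ i, x i :=
      sum_lt_sum_of_nonempty univ_nonempty fun i _ => by nlinarith [hxy i, hk i]
    linarith
  -- Off `k` all coordinates are small roots and every ratio `x j / y j` is below
  -- `(1 - x k) / (1 - y k)`, the ratio of their sums.
  obtain ⟨k, hk⟩ := hk
  have hxyk : x k < y k := by nlinarith [hxy k]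
  have hother : ∀ j ∈ univ.erase k, x j * (1 - y k) < y j * (1 - x k) := by
    intro j hj
    have hjk := (mem_erase.1 hj).1
    have hyxj : y j < x j := by nlinarith [hxy j, hx hjk, hy hjk]
    have hcjk : c j < c k := by
      have := (lt_iff_mul_one_sub_lt (hy hjk)).1 (by linarith [hy hjk])
      rw [hys, hys] at this
      exact lt_of_mul_lt_mul_left this hs.le
    have hxjk : x j < x k := by
      rw [lt_iff_mul_one_sub_lt (hx hjk), hxt, hxt]
      exact mul_lt_mul_of_pos_left hcjk (hs.trans hst)
    have hyj0 : 0 < y j := by nlinarith [hys j, hc j]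
    have hmin : min (x k) (1 - x k) * (1 - min (x k) (1 - x k)) = t * c k := by
      rcases min_cases (x k) (1 - x k) with ⟨h, -⟩ | ⟨h, -⟩ <;> rw [h] <;>
        linear_combination hxt k
    calc x j * (1 - y k) < y j * min (x k) (1 - x k) :=
          mul_lt_mul_of_mul_one_sub_eq hs hst (hc j) hcjk (by linarith [hx hjk])
            (by linarith [hx hjk])
            (by linarith [min_le_left (x k) (1 - x k), min_le_right (x k) (1 - x k)])
            (by linarith) (hxt j) (hys j) hmin (by linear_combination hys k)
      _ ≤ y j * (1 - x k) := mul_le_mul_of_nonneg_left (min_le_right _ _) hyj0.le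
  have hxk := sum_erase_eq_sub (f := x) (mem_univ k)
  have hyk := sum_erase_eq_sub (f := y) (mem_univ k)
  have hne : (univ.erase k).Nonempty := by
    rw [nonempty_iff_ne_empty]
    intro he
    rw [he, sum_empty] at hxk hyk
    linarith
  have := sum_lt_sum_of_nonempty hne hother
  rw [← sum_mul, ← sum_mul, hxk, hyk, hx1, hy1] at this
  linarith

lemma eq_of_mul_one_sub_eq_smul [Fintype ι] (hc : ∀ i, 0 < c i) {s t : ℝ} (ht : 0 < t)
    (hs : 0 < s) (hx : Pairwise fun i j => x i + x j < 1) (hy : Pairwise fun i j => y i + y j < 1)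
    (hx1 : ∑ i, x i = 1) (hy1 : ∑ i, y i = 1)
    (hxt : ∀ i, x i * (1 - x i) = t * c i) (hys : ∀ i, y i * (1 - y i) = s * c i) : x = y := by
  rcases lt_trichotomy s t with hst | rfl | hst
  · exact (false_of_mul_one_sub_eq_smul_of_lt hc hs hst hx hy hx1 hy1 hxt hys).elim
  · exact eq_of_mul_one_sub_eq hx hy (hx1.trans hy1.symm) fun i => (hxt i).trans (hys i).symm
  · exact (false_of_mul_one_sub_eq_smul_of_lt hc ht hst hy hx hy1 hx1 hys hxt).elim

lemma exists_pos_sum_eq_one_mul_one_sub_eq_smul [Fintype ι] [Nonempty ι] (hc0 : ∀ i, 0 < c i)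
    (hc1 : ∑ i, c i = 1) (hc : ∀ i, c i < 1 / 2) :
    ∃ x : ι → ℝ, (∀ i, 0 < x i) ∧ ∑ i, x i = 1 ∧
      ∃ t, 0 < t ∧ ∀ i, x i * (1 - x i) = t * c i := by
  classical
  obtain ⟨k, hk⟩ := Finite.exists_max c
  -- `u = x k` is the free parameter, `t = u (1 - u) / c k`, and every other coordinate is the
  -- small root for `t`; the intermediate value theorem adjusts `u` so that `∑ x = 1`.
  set S : ℝ → ℝ := fun u => u + ∑ i ∈ univ.erase k, smallRoot (u * (1 - u) / c k * c i)
  have hS : Continuous S := by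
    refine continuous_id.add (continuous_finsetSum _ fun i _ => continuous_smallRoot.comp ?_)
    fun_prop
  have hroot : ∀ u i, 4 * (u * (1 - u) / c k * c i) ≤ 1 := fun u i => by
    have h1 : u * (1 - u) / c k * c i = u * (1 - u) * (c i / c k) := by ring
    have h2 : c i / c k ≤ 1 := (div_le_one (hc0 k)).2 (hk i)
    have h3 : 0 ≤ c i / c k := (div_pos (hc0 i) (hc0 k)).le
    rw [h1]
    nlinarith [sq_nonneg (2 * u - 1)]
  have hS0 : S 0 = 0 := by simp [S, smallRoot_zero]
  have hS1 : 1 ≤ S (2 * c k) := by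
    have hle := sum_le_sum fun i (_ : i ∈ univ.erase k) => le_smallRoot (hroot (2 * c k) i)
    have ht : 2 * c k * (1 - 2 * c k) / c k = 2 * (1 - 2 * c k) := by
      field_simp [(hc0 k).ne']
    rw [← mul_sum, sum_erase_eq_sub (mem_univ k), hc1, ht] at hle
    simp only [S, ht]
    nlinarith [sq_nonneg (1 - 2 * c k)]
  obtain ⟨u, ⟨hu0, hu1⟩, hSu⟩ := intermediate_value_Icc (by linarith [hc0 k]) hS.continuousOn
    ⟨hS0.le.trans zero_le_one, hS1⟩
  have hu : 0 < u := hu0.lt_of_ne (by rintro rfl; simp [hS0] at hSu)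
  have hu1 : u < 1 := by linarith [hc k]
  set t := u * (1 - u) / c k
  have ht : 0 < t := div_pos (mul_pos hu (by linarith)) (hc0 k)
  refine ⟨Function.update (fun i => smallRoot (t * c i)) k u, fun i => ?_, ?_, t, ht, fun i => ?_⟩
  · rcases eq_or_ne i k with rfl | hik
    · simpa using hu
    · simpa [hik] using (mul_pos ht (hc0 i)).trans_le (le_smallRoot (hroot u i))
  · rw [sum_update_of_mem (mem_univ k), sdiff_singleton_eq_erase]
    exact hSu
  · rcases eq_or_ne i k with rfl | hik
    · simp only [Function.update_self, t]
      field_simp [(hc0 i).ne']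
    · simpa [hik] using smallRoot_mul_one_sub (hroot u i)

end Profiles

theorem stmt4 {n : ℕ} (hn : 3 ≤ n) (C : Matrix (Fin n) (Fin n) ℝ) (hC : IsRIM C)
    (hirr : Irred C) (hnostar : ¬ HasStarTopology C)
    (c : Fin n → ℝ) (hc : DominantLeftEigenvector C c) :
    ∃ xs ∈ simplex n,
      (∀ i, 0 < xs i) ∧ DF C xs = xs ∧
      (∀ y ∈ simplex n, (∀ i, 0 < y i) → DF C y = y → y = xs) ∧
      (∀ x ∈ simplex n, (DF C x = x ↔ (∃ i, x = vertex n i) ∨ x = xs)) ∧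
      (∀ i j, (xs j < xs i ↔ c j < c i) ∧ (xs i = xs j ↔ c i = c j)) := by
  have : Nontrivial (Fin n) := Fin.nontrivial_iff_two_le.2 (by omega)
  have hc0 := hc.pos hirr hC.1
  have hfix : ∀ x, DF C x = x ↔ ∃ t, ∀ i, x i * (1 - x i) = t * c i := fun x =>
    hirr.DF_eq_self_iff_exists hC.1 hc0 (funext hc.2)
  have hint : ∀ x ∈ simplex n, (∀ i, 0 < x i) → Pairwise fun i j => x i + x j < 1 :=
    fun x hx hx0 => pairwise_add_lt_one (by simp; omega) hx0 hx.2
  obtain ⟨xs, hxs0, hxs1, t, ht, hxst⟩ :=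
    exists_pos_sum_eq_one_mul_one_sub_eq_smul hc0 hc.1.2 (hc.lt_half hC hnostar hc0)
  have hxs : xs ∈ simplex n := ⟨fun i => (hxs0 i).le, hxs1⟩
  have huniq : ∀ y ∈ simplex n, (∀ i, 0 < y i) → DF C y = y → y = xs := by
    intro y hy hy0 hyfix
    obtain ⟨s, hys⟩ := (hfix y).1 hyfix
    exact eq_of_mul_one_sub_eq_smul hc0 (pos_of_mul_one_sub_eq_smul hy0 (hint y hy hy0) hc0 hys) ht
      (hint y hy hy0) (hint xs hxs hxs0) hy.2 hxs1 hys hxst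
  refine ⟨xs, hxs, hxs0, (hfix xs).2 ⟨t, hxst⟩, huniq, fun x hx => ⟨fun hxfix => ?_, ?_⟩,
    lt_iff_lt_and_eq_iff_eq_of_mul_one_sub_eq_smul ht (hint xs hxs hxs0) hxst⟩
  · by_cases hx0 : ∀ i, 0 < x i
    · exact .inr (huniq x hx hx0 hxfix)
    obtain ⟨T, hxT⟩ := (hfix x).1 hxfix
    obtain ⟨i, hi⟩ := not_forall.1 hx0
    have hT : T = 0 := by
      simpa [le_antisymm (not_lt.1 hi) (hx.1 i), (hc0 i).ne'] using (hxT i).symm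
    exact .inl (exists_eq_vertex_of_mul_one_sub_eq_zero hx fun j => by rw [hxT j, hT, zero_mul])
  · rintro (⟨i, rfl⟩ | rfl)
    · exact (hfix _).2 ⟨0, fun j => by by_cases h : j = i <;> simp [vertex, h]⟩
    · exact (hfix _).2 ⟨t, hxst⟩
end

section
/- Let n ≥ 3, let C be an irreducible relative interaction matrix with dominant left eigenvector c, and let x ∈ Δⁿ \ {e_1, …, e_n} satisfy F(x) = x. Then the vector x − x² is a positive scalar multiple of c; more precisely, setting α = ∑_{j=1}^n x_j(1 − x_j) > 0, one has x_i(1 − x_i) = α c_i for every i, and equivalently x_i = α c_i/(1 − x_i) with α = 1 / ∑_{j=1}^n ( c_j/(1 − x_j) ). -/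
lemma pow_entry_nonneg {n : ℕ} {C : Matrix (Fin n) (Fin n) ℝ} (h : ∀ i j, 0 ≤ C i j) :
    ∀ k i j, 0 ≤ (C ^ k) i j := by
  intro k
  induction k with
  | zero =>
    intro i j
    simp only [pow_zero, Matrix.one_apply]
    split <;> norm_num
  | succ k ih =>
    intro i j
    rw [pow_succ, Matrix.mul_apply]
    exact Finset.sum_nonneg fun l _ => mul_nonneg (ih i l) (h l j)

lemma eig_pow {n : ℕ} {C : Matrix (Fin n) (Fin n) ℝ} {v : Fin n → ℝ}
    (hv : ∀ j, ∑ i, v i * C i j = v j) :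
    ∀ k j, ∑ i, v i * (C ^ k) i j = v j := by
  intro k
  induction k with
  | zero =>
    intro j
    simp [Matrix.one_apply]
  | succ k ih =>
    intro j
    have hexp : ∀ i, (C ^ (k+1)) i j = ∑ l, (C ^ k) i l * C l j := fun i => by
      rw [pow_succ, Matrix.mul_apply]
    calc ∑ i, v i * (C ^ (k+1)) i j
        = ∑ i, ∑ l, v i * ((C ^ k) i l * C l j) := by
          simp_rw [hexp, Finset.mul_sum]
      _ = ∑ l, (∑ i, v i * (C ^ k) i l) * C l j := by
          rw [Finset.sum_comm]; simp_rw [Finset.sum_mul, mul_assoc]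
      _ = ∑ l, v l * C l j := by simp_rw [ih]
      _ = v j := hv j

lemma zero_of_entry_zero {n : ℕ} {C : Matrix (Fin n) (Fin n) ℝ}
    (hC : ∀ i j, 0 ≤ C i j) (hirr : Irred C) {v : Fin n → ℝ}
    (hv0 : ∀ i, 0 ≤ v i) (hv : ∀ j, ∑ i, v i * C i j = v j)
    {i0 : Fin n} (h0 : v i0 = 0) : ∀ j, v j = 0 := by
  intro j
  by_cases hj : j = i0
  · rw [hj]; exact h0
  obtain ⟨k, _, hkpos⟩ := hirr j i0 hj
  have hsum := eig_pow hv k i0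
  rw [h0] at hsum
  have hterms : ∀ i ∈ Finset.univ, 0 ≤ v i * (C ^ k) i i0 :=
    fun i _ => mul_nonneg (hv0 i) (pow_entry_nonneg hC k i i0)
  have hz := (Finset.sum_eq_zero_iff_of_nonneg hterms).mp hsum j (Finset.mem_univ j)
  rcases mul_eq_zero.mp hz with h | h
  · exact h
  · exact absurd h (ne_of_gt hkpos)

lemma eig_unique {n : ℕ} (hn : 0 < n) {C : Matrix (Fin n) (Fin n) ℝ}
    (hC : ∀ i j, 0 ≤ C i j) (hirr : Irred C)
    {v w : Fin n → ℝ}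
    (hv : v ∈ simplex n) (hveig : ∀ j, ∑ i, v i * C i j = v j)
    (hw : w ∈ simplex n) (hweig : ∀ j, ∑ i, w i * C i j = w j) :
    v = w := by
  have hwpos : ∀ i, 0 < w i := by
    intro i
    rcases lt_or_eq_of_le (hw.1 i) with h | h
    · exact h
    · exfalso
      have hall := zero_of_entry_zero hC hirr hw.1 hweig h.symm
      have hs : ∑ i, w i = 0 := Finset.sum_eq_zero fun j _ => hall j
      rw [hw.2] at hs; norm_num at hs
  obtain ⟨i0, _, hmin⟩ := Finset.exists_min_image Finset.univ (fun i => v i / w i)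
    ⟨⟨0, hn⟩, Finset.mem_univ _⟩
  set t := v i0 / w i0 with ht
  have hd0 : ∀ i, 0 ≤ v i - t * w i := by
    intro i
    have h1 : t ≤ v i / w i := hmin i (Finset.mem_univ i)
    rw [le_div_iff₀ (hwpos i)] at h1
    linarith
  have hdeig : ∀ j, ∑ i, (v i - t * w i) * C i j = v j - t * w j := by
    intro j
    simp_rw [sub_mul, Finset.sum_sub_distrib, mul_assoc, ← Finset.mul_sum, hveig j, hweig j]
  have hdi0 : v i0 - t * w i0 = 0 := by
    rw [ht, div_mul_cancel₀ _ (ne_of_gt (hwpos i0))]; ring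
  have hall := zero_of_entry_zero hC hirr hd0 hdeig hdi0
  have hsum : ∑ i, (v i - t * w i) = 0 := Finset.sum_eq_zero fun j _ => hall j
  rw [Finset.sum_sub_distrib, ← Finset.mul_sum, hv.2, hw.2] at hsum
  have ht1 : t = 1 := by linarith
  funext j
  have hj := hall j
  rw [ht1] at hj; linarith

lemma simplex_eq_vertex {n : ℕ} {x : Fin n → ℝ} (hx : x ∈ simplex n) {i : Fin n}
    (hi : x i = 1) : x = vertex n i := by
  have herase : ∑ j ∈ Finset.univ.erase i, x j = 0 := by
    have := Finset.sum_erase_add Finset.univ x (Finset.mem_univ i)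
    rw [hx.2, hi] at this
    linarith
  have hz := (Finset.sum_eq_zero_iff_of_nonneg (fun j _ => hx.1 j)).mp herase
  funext j
  by_cases hj : j = i
  · rw [hj, hi]; simp [vertex]
  · have := hz j (Finset.mem_erase.mpr ⟨hj, Finset.mem_univ j⟩)
    rw [this]; simp [vertex, hj]

theorem stmt6 {n : ℕ} (hn : 3 ≤ n) (C : Matrix (Fin n) (Fin n) ℝ) (hC : IsRIM C)
    (hirr : Irred C) (c : Fin n → ℝ) (hc : DominantLeftEigenvector C c)
    (x : Fin n → ℝ) (hx : x ∈ simplex n) (hxv : ∀ i, x ≠ vertex n i)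
    (hfix : DF C x = x) :
    0 < ∑ j, x j * (1 - x j) ∧
    (∀ i, x i * (1 - x i) = (∑ j, x j * (1 - x j)) * c i) ∧
    (∀ i, x i = (∑ j, x j * (1 - x j)) * c i / (1 - x i)) ∧
    (∑ j, x j * (1 - x j)) = 1 / ∑ j, c j / (1 - x j) := by
  have hnpos : 0 < n := by omega
  set y : Fin n → ℝ := fun i => x i * (1 - x i) with hy
  have hxle : ∀ i, x i ≤ 1 := by
    intro i
    have := Finset.single_le_sum (fun j _ => hx.1 j) (Finset.mem_univ i)
    rw [hx.2] at this; exact this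
  have hxne1 : ∀ i, x i ≠ 1 := by
    intro i hi
    exact hxv i (simplex_eq_vertex hx hi)
  have hynn : ∀ i, 0 ≤ y i := fun i => mul_nonneg (hx.1 i) (by linarith [hxle i])
  -- y is a left eigenvector
  have hyeig : ∀ j, ∑ i, y i * C i j = y j := by
    intro j
    have hfj := congrFun hfix j
    simp only [DF] at hfj
    have : ∑ i, y i * C i j = ∑ i, C i j * (x i - (x i) ^ 2) := by
      apply Finset.sum_congr rfl
      intro i _; simp only [hy]; ring
    rw [this]
    have : y j = x j - (x j) ^ 2 := by simp only [hy]; ring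
    rw [this]; linarith
  set α := ∑ j, x j * (1 - x j) with hα
  have hαy : α = ∑ j, y j := rfl
  have hαpos : 0 < α := by
    rcases lt_or_eq_of_le (Finset.sum_nonneg (fun j _ => hynn j)) with h | h
    · exact h
    · exfalso
      have hz := (Finset.sum_eq_zero_iff_of_nonneg (fun j _ => hynn j)).mp h.symm
      -- each x j is 0 or 1; since sum = 1, some x i = 1
      have hx01 : ∀ j, x j = 0 ∨ x j = 1 := by
        intro j
        have := hz j (Finset.mem_univ j)
        simp only [hy] at this
        rcases mul_eq_zero.mp this with h | h
        · exact Or.inl h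
        · exact Or.inr (by linarith)
      by_cases hex : ∃ i, x i = 1
      · obtain ⟨i, hi⟩ := hex
        exact hxne1 i hi
      · push_neg at hex
        have : ∀ j, x j = 0 := fun j => (hx01 j).resolve_right (hex j)
        have hs : ∑ j, x j = 0 := Finset.sum_eq_zero fun j _ => this j
        rw [hx.2] at hs; norm_num at hs
  have hαne : α ≠ 0 := ne_of_gt hαpos
  -- z = y/α equals c
  have hzsimplex : (fun i => y i / α) ∈ simplex n := by
    constructor
    · intro i; exact div_nonneg (hynn i) (le_of_lt hαpos)
    · rw [← Finset.sum_div, ← hαy, div_self hαne]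
  have hzeig : ∀ j, ∑ i, y i / α * C i j = y j / α := by
    intro j
    rw [eq_div_iff hαne, Finset.sum_mul, ← hyeig j]
    apply Finset.sum_congr rfl
    intro i _; field_simp
  have hzc : (fun i => y i / α) = c :=
    eig_unique hnpos hC.1 hirr hzsimplex hzeig hc.1 hc.2
  have hclaim2 : ∀ i, x i * (1 - x i) = α * c i := by
    intro i
    have := congrFun hzc i
    rw [← this, hy]
    field_simp
  have hne : ∀ i, (1 : ℝ) - x i ≠ 0 := by
    intro i h
    exact hxne1 i (by linarith)
  refine ⟨hαpos, hclaim2, ?_, ?_⟩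
  · intro i
    rw [eq_div_iff (hne i)]
    exact hclaim2 i
  · have hterm : ∀ j, c j / (1 - x j) = x j / α := by
      intro j
      have h2 := hclaim2 j
      rw [div_eq_div_iff (hne j) hαne]
      linarith [h2]
    have : ∑ j, c j / (1 - x j) = 1 / α := by
      simp_rw [hterm]
      rw [← Finset.sum_div, hx.2]
    rw [this, one_div_one_div]
end

section
/- Let n ≥ 2, let C be an irreducible relative interaction matrix, and let x ∈ Δⁿ \ {e_1, …, e_n} (so 0 ≤ x_i < 1 for all i and x_i > 0 for some i). Then the influence matrix W(x) = diag(x) + (I_n − diag(x)) C is row-stochastic, irreducible, and primitive: there exists k ≥ 1 such that every entry of W(x)^k is strictly positive. -/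
/-- The influence matrix W(x) = diag(x) + (Iₙ − diag(x)) C. -/
noncomputable def infl {n : ℕ} (C : Matrix (Fin n) (Fin n) ℝ) (x : Fin n → ℝ) :
    Matrix (Fin n) (Fin n) ℝ :=
  Matrix.of fun i j => (if i = j then x i else 0) + (1 - x i) * C i j

section Aux
variable {n : ℕ}

lemma pow_entries_nonneg {A : Matrix (Fin n) (Fin n) ℝ} (hA : ∀ i j, 0 ≤ A i j) :
    ∀ k i j, 0 ≤ (A ^ k) i j := by
  intro k
  induction k with
  | zero => intro i j; simp [Matrix.one_apply]; positivity
  | succ k ih =>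
    intro i j
    rw [pow_succ, Matrix.mul_apply]
    exact Finset.sum_nonneg fun l _ => mul_nonneg (ih i l) (hA l j)

lemma pow_add_entry_ge {A : Matrix (Fin n) (Fin n) ℝ} (hA : ∀ i j, 0 ≤ A i j)
    (p q : ℕ) (i j k₀ : Fin n) :
    (A ^ p) i k₀ * (A ^ q) k₀ j ≤ (A ^ (p + q)) i j := by
  rw [pow_add, Matrix.mul_apply]
  exact Finset.single_le_sum
    (fun l _ => mul_nonneg (pow_entries_nonneg hA p i l) (pow_entries_nonneg hA q l j))
    (Finset.mem_univ k₀)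

lemma pow_entries_mono {A B : Matrix (Fin n) (Fin n) ℝ} (hB : ∀ i j, 0 ≤ B i j)
    (hAB : ∀ i j, B i j ≤ A i j) :
    ∀ k i j, (B ^ k) i j ≤ (A ^ k) i j := by
  intro k
  induction k with
  | zero => intro i j; simp
  | succ k ih =>
    intro i j
    rw [pow_succ, pow_succ, Matrix.mul_apply, Matrix.mul_apply]
    refine Finset.sum_le_sum fun l _ => ?_
    exact mul_le_mul (ih i l) (hAB l j) (hB l j)
      (pow_entries_nonneg (fun i j => (hB i j).trans (hAB i j)) k i l)

end Aux

theorem stmt8 {n : ℕ} (hn : 2 ≤ n) (C : Matrix (Fin n) (Fin n) ℝ) (hC : IsRIM C)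
    (hirr : Irred C)
    (x : Fin n → ℝ) (hx : x ∈ simplex n) (hxv : ∀ i, x ≠ vertex n i) :
    (∀ i j, 0 ≤ infl C x i j) ∧ (∀ i, ∑ j, infl C x i j = 1) ∧
    Irred (infl C x) ∧
    (∃ k, 1 ≤ k ∧ ∀ i j, 0 < ((infl C x) ^ k) i j) := by
  obtain ⟨hC0, hC1, hCd⟩ := hC
  obtain ⟨hx0, hx1⟩ := hx
  have : NeZero n := ⟨by omega⟩
  -- every coordinate < 1
  have hxlt : ∀ i, x i < 1 := by
    intro i
    rcases lt_or_ge (x i) 1 with h | h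
    · exact h
    have hle : x i ≤ 1 := hx1 ▸ Finset.single_le_sum (fun j _ => hx0 j) (Finset.mem_univ i)
    have hxi : x i = 1 := le_antisymm hle h
    exfalso
    apply hxv i
    funext j
    by_cases hji : j = i
    · simp [vertex, hji, hxi]
    · simp only [vertex, if_neg hji]
      have hsum : ∑ k ∈ Finset.univ.erase i, x k = 0 := by
        have := Finset.add_sum_erase Finset.univ x (Finset.mem_univ i)
        rw [hx1, hxi] at this
        linarith
      have := (Finset.sum_eq_zero_iff_of_nonneg (fun k _ => hx0 k)).mp hsum j
        (Finset.mem_erase.mpr ⟨hji, Finset.mem_univ j⟩)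
      exact this
  -- some coordinate positive
  obtain ⟨i0, hi0⟩ : ∃ i, 0 < x i := by
    by_contra h
    push_neg at h
    have : ∑ i, x i = 0 := Finset.sum_eq_zero fun i _ => le_antisymm (h i) (hx0 i)
    rw [hx1] at this; norm_num at this
  set W := infl C x with hW
  have hWapp : ∀ i j, W i j = (if i = j then x i else 0) + (1 - x i) * C i j := fun i j => rfl
  have hW0 : ∀ i j, 0 ≤ W i j := by
    intro i j
    rw [hWapp]
    have : 0 ≤ (1 - x i) * C i j := mul_nonneg (by linarith [hxlt i]) (hC0 i j)
    by_cases h : i = j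
    · subst h
      rw [if_pos rfl]
      linarith [hx0 i]
    · simp only [if_neg h]
      linarith
  have hWrow : ∀ i, ∑ j, W i j = 1 := by
    intro i
    simp only [hWapp, Finset.sum_add_distrib, ← Finset.mul_sum, hC1 i,
      Finset.sum_ite_eq, Finset.mem_univ, if_true]
    ring
  -- ε = min over i of 1 - x i
  set ε : ℝ := Finset.univ.inf' Finset.univ_nonempty (fun i => 1 - x i) with hε
  have hεpos : 0 < ε := by
    rw [hε, Finset.lt_inf'_iff]
    intro i _; linarith [hxlt i]
  have hεle : ∀ i, ε ≤ 1 - x i := fun i =>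
    Finset.inf'_le _ (Finset.mem_univ i)
  -- W ≥ ε • C entrywise
  have hge : ∀ i j, (ε • C) i j ≤ W i j := by
    intro i j
    rw [hWapp]
    have h1 : ε * C i j ≤ (1 - x i) * C i j := mul_le_mul_of_nonneg_right (hεle i) (hC0 i j)
    have h2 : (0:ℝ) ≤ if i = j then x i else 0 := by
      by_cases h : i = j
      · subst h; simp [hx0 i]
      · simp [h]
    simpa [Matrix.smul_apply, smul_eq_mul] using le_add_of_nonneg_of_le h2 h1
  have hεC0 : ∀ i j, 0 ≤ (ε • C) i j := fun i j => by
    simpa [Matrix.smul_apply, smul_eq_mul] using mul_nonneg hεpos.le (hC0 i j)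
  have hWirr : Irred W := by
    intro i j hij
    obtain ⟨k, hk1, hkpos⟩ := hirr i j hij
    refine ⟨k, hk1, ?_⟩
    have h1 : ((ε • C) ^ k) i j ≤ (W ^ k) i j := pow_entries_mono hεC0 hge k i j
    have h2 : ((ε • C) ^ k) i j = ε ^ k * (C ^ k) i j := by
      rw [smul_pow]; simp [Matrix.smul_apply, smul_eq_mul]
    have : 0 < ε ^ k * (C ^ k) i j := mul_pos (pow_pos hεpos k) hkpos
    linarith [h2 ▸ this]
  refine ⟨hW0, hWrow, hWirr, ?_⟩
  -- primitivity
  have hWdiag : 0 < W i0 i0 := by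
    rw [hWapp]; simp [hCd i0]; exact hi0
  have hdiagpow : ∀ m, 0 < (W ^ m) i0 i0 := by
    intro m
    induction m with
    | zero => simp [Matrix.one_apply]
    | succ m ih =>
      have := pow_add_entry_ge hW0 m 1 i0 i0 i0
      rw [pow_one] at this
      calc (0:ℝ) < (W ^ m) i0 i0 * W i0 i0 := mul_pos ih hWdiag
        _ ≤ (W ^ (m + 1)) i0 i0 := this
  -- choose path lengths to and from i0
  have hto : ∀ i : Fin n, ∃ a, 0 < (W ^ a) i i0 := by
    intro i
    by_cases h : i = i0
    · exact ⟨0, by simp [h, Matrix.one_apply]⟩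
    · obtain ⟨k, _, hk⟩ := hWirr i i0 h; exact ⟨k, hk⟩
  have hfrom : ∀ j : Fin n, ∃ b, 0 < (W ^ b) i0 j := by
    intro j
    by_cases h : i0 = j
    · exact ⟨0, by simp [h, Matrix.one_apply]⟩
    · obtain ⟨k, _, hk⟩ := hWirr i0 j h; exact ⟨k, hk⟩
  choose a ha using hto
  choose b hb using hfrom
  set Ka := Finset.univ.sup a with hKa
  set Kb := Finset.univ.sup b with hKb
  refine ⟨Ka + Kb + 1, by omega, ?_⟩
  intro i j
  have hai : a i ≤ Ka := Finset.le_sup (Finset.mem_univ i)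
  have hbj : b j ≤ Kb := Finset.le_sup (Finset.mem_univ j)
  have hdecomp : Ka + Kb + 1 = a i + ((Ka - a i) + (Kb - b j) + 1) + b j := by omega
  rw [hdecomp]
  have h1 : (W ^ (a i)) i i0 * (W ^ ((Ka - a i) + (Kb - b j) + 1)) i0 i0 ≤
      (W ^ (a i + ((Ka - a i) + (Kb - b j) + 1))) i i0 :=
    pow_add_entry_ge hW0 _ _ i i0 i0
  have h2 : (W ^ (a i + ((Ka - a i) + (Kb - b j) + 1))) i i0 * (W ^ (b j)) i0 j ≤
      (W ^ (a i + ((Ka - a i) + (Kb - b j) + 1) + b j)) i j :=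
    pow_add_entry_ge hW0 _ _ i j i0
  have hpos1 : 0 < (W ^ (a i)) i i0 * (W ^ ((Ka - a i) + (Kb - b j) + 1)) i0 i0 :=
    mul_pos (ha i) (hdiagpow _)
  have hpos2 : 0 < (W ^ (a i + ((Ka - a i) + (Kb - b j) + 1))) i i0 := lt_of_lt_of_le hpos1 h1
  exact lt_of_lt_of_le (mul_pos hpos2 (hb j)) h2
end

section
/- Let n ≥ 3 and let C be a reducible relative interaction matrix whose digraph G(C) has exactly the two globally reachable nodes 1 and 2 (necessarily C_{12} = C_{21} = 1). Then every point of the form x* = (α, 1 − α, 0, …, 0) with α ∈ [0,1] is a fixed point of F, the fixed points of F in Δⁿ are exactly these points together with the vertices e_3, …, e_n, and for every initial condition x(0) ∈ Δⁿ \ {e_1, …, e_n} the iterates x(t+1) = F(x(t)) converge exponentially to a point of the form (α, 1 − α, 0, …, 0). -/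
/-- Node i is globally reachable in G(C): every other node reaches i. -/
def GloballyReachable {n : ℕ} (C : Matrix (Fin n) (Fin n) ℝ) (i : Fin n) : Prop :=
  ∀ j, j ≠ i → ∃ k, 1 ≤ k ∧ 0 < (C ^ k) j i

/-- The point (α, 1 − α, 0, …, 0). -/
noncomputable def pt (n : ℕ) (α : ℝ) : Fin n → ℝ :=
  fun i => if (i : ℕ) = 0 then α else if (i : ℕ) = 1 then 1 - α else 0

/-!
Let `S = {i | 2 ≤ i}` (`transientNodes`). Since `C₀₁ = C₁₀ = 1`, no edge leaves `{0, 1}` and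
every `(α, 1 - α, 0, …, 0)` is fixed. Node `0` is reachable from every node of `S`, so there are
weights `p ≥ 𝟙_S`, vanishing off `S`, with `C p ≤ θ p` for some `θ < 1`. Writing
`F(x) = (x - x²)ᵀ C + x²` gives `p ⬝ F(x) ≤ p ⬝ x - (1 - θ) p ⬝ (x - x²)`. At a fixed point this
forces `xᵢ ∈ {0, 1}` on `S`. Along an orbit that avoids the vertices, positive mass spreads to
node `0`, so the mass `s = 𝟙_S ⬝ x` eventually drops below `1`; from then on `p ⬝ x`, and with it
`s`, decays geometrically. Finally `|x₀(t + 1) - x₀(t)| ≤ 2 s(t)`, so `x₀` converges geometrically.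
-/

open Finset Matrix Filter Topology

section DotProduct

variable {ι : Type*} [Fintype ι] {S : Set ι}

lemma apply_le_indicator_dotProduct {x : ι → ℝ} (hx : 0 ≤ x) {i : ι} (hi : i ∈ S) :
    x i ≤ S.indicator 1 ⬝ᵥ x := by
  simpa [hi, dotProduct] using single_le_sum (f := fun j => S.indicator 1 j * x j)
    (fun j _ => mul_nonneg (Set.indicator_nonneg (fun _ _ => zero_le_one) j) (hx j)) (mem_univ i)

lemma dotProduct_sq_le {p x : ι → ℝ} (hp : 0 ≤ p) (hpS : ∀ i ∉ S, p i = 0) (hx : 0 ≤ x) :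
    p ⬝ᵥ x ^ 2 ≤ (S.indicator 1 ⬝ᵥ x) * (p ⬝ᵥ x) := by
  rw [mul_comm, dotProduct, dotProduct, sum_mul]
  refine sum_le_sum fun i _ => ?_
  by_cases hi : i ∈ S
  · calc p i * (x ^ 2) i = p i * x i * x i := by rw [Pi.pow_apply, sq, mul_assoc]
      _ ≤ p i * x i * (S.indicator 1 ⬝ᵥ x) :=
        mul_le_mul_of_nonneg_left (apply_le_indicator_dotProduct hx hi) (mul_nonneg (hp i) (hx i))
  · simp [hpS i hi]

end DotProduct

namespace Matrix

variable {ι : Type*} [Fintype ι] {S : Set ι} {C : Matrix ι ι ℝ}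

lemma mulVec_mono_of_nonneg (hC : ∀ i j, 0 ≤ C i j) {u v : ι → ℝ}
    (h : u ≤ v) : C *ᵥ u ≤ C *ᵥ v :=
  fun i => dotProduct_le_dotProduct_of_nonneg_left h (hC i)

lemma mulVec_apply_eq_zero_of_notMem (hS : ∀ i j, i ∉ S → j ∈ S → C i j = 0)
    {v : ι → ℝ} (hv : ∀ j ∉ S, v j = 0) {i : ι} (hi : i ∉ S) : (C *ᵥ v) i = 0 :=
  sum_eq_zero fun j _ => by by_cases hj : j ∈ S <;> simp [hS i j hi, hv j, hj]

variable [DecidableEq ι]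

lemma apply_eq_zero_of_apply_eq_one (hC : C ∈ rowStochastic ℝ ι) {i j k : ι} (hk : C i k = 1)
    (hj : j ≠ k) : C i j = 0 := by
  have := sum_row_of_mem_rowStochastic hC i
  rw [← add_sum_erase _ _ (mem_univ k), hk, add_eq_left,
    sum_eq_zero_iff_of_nonneg fun l _ => hC.1 i l] at this
  exact this j (mem_erase.2 ⟨hj, mem_univ j⟩)

lemma apply_eq_one_of_forall_ne (hC : C ∈ rowStochastic ℝ ι) {i k : ι} (h : ∀ j ≠ k, C i j = 0) :
    C i k = 1 := by
  rw [← sum_row_of_mem_rowStochastic hC i, Fintype.sum_eq_single k h]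

lemma mulVec_indicator_le (hC : C ∈ rowStochastic ℝ ι)
    (hS : ∀ i j, i ∉ S → j ∈ S → C i j = 0) : C *ᵥ S.indicator 1 ≤ S.indicator 1 := by
  intro i
  by_cases hi : i ∈ S
  · calc (C *ᵥ S.indicator 1) i ≤ (C *ᵥ 1) i :=
          mulVec_mono_of_nonneg hC.1 (Set.indicator_le_self' fun _ _ => zero_le_one) i
      _ = S.indicator 1 i := by simp [one_vecMul_of_mem_rowStochastic hC, hi]
  · rw [mulVec_apply_eq_zero_of_notMem hS (fun j hj => Set.indicator_of_notMem hj _) hi,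
      Set.indicator_of_notMem hi]

lemma pow_mulVec_indicator_apply_eq_zero (hS : ∀ i j, i ∉ S → j ∈ S → C i j = 0) (k : ℕ) :
    ∀ i ∉ S, (C ^ k *ᵥ S.indicator 1) i = 0 := by
  induction k with
  | zero => intro i hi; simp [hi]
  | succ k ih =>
    intro i hi
    rw [pow_succ', ← mulVec_mulVec]
    exact mulVec_apply_eq_zero_of_notMem hS ih hi

lemma antitone_pow_mulVec_indicator (hC : C ∈ rowStochastic ℝ ι)
    (hS : ∀ i j, i ∉ S → j ∈ S → C i j = 0) : Antitone fun k => C ^ k *ᵥ S.indicator 1 :=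
  antitone_nat_of_succ_le fun k => by
    simp only [pow_succ, ← mulVec_mulVec]
    exact mulVec_mono_of_nonneg (pow_mem hC k).1 (mulVec_indicator_le hC hS)

lemma exists_pow_mulVec_indicator_lt_one (hC : C ∈ rowStochastic ℝ ι)
    (hS : ∀ i j, i ∉ S → j ∈ S → C i j = 0)
    (hreach : ∀ i ∈ S, ∃ k, ∃ j ∉ S, 0 < (C ^ k) i j) :
    ∃ m, 1 ≤ m ∧ ∀ i ∈ S, (C ^ m *ᵥ S.indicator 1) i < 1 := by
  have hlt (i : ι) (hi : i ∈ S) : ∃ k, (C ^ k *ᵥ S.indicator 1) i < 1 := by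
    obtain ⟨k, j, hj, hpos⟩ := hreach i hi
    have hle : (S.indicator 1 + Pi.single j 1 : ι → ℝ) ≤ 1 := by
      intro l
      by_cases hl : l = j
      · subst hl; simp [hj]
      · by_cases hlS : l ∈ S <;> simp [hl, hlS]
    have := mulVec_mono_of_nonneg (pow_mem hC k).1 hle i
    rw [mulVec_add, mulVec_single_one, one_vecMul_of_mem_rowStochastic (pow_mem hC k)] at this
    simp only [Pi.add_apply, col_apply, Pi.one_apply] at this
    exact ⟨k, by linarith⟩
  refine ((eventually_ge_atTop 1).and (eventually_all.2 fun i => ?_)).exists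
  by_cases hi : i ∈ S
  · obtain ⟨k, hk⟩ := hlt i hi
    exact eventually_atTop.2
      ⟨k, fun l hl _ => (antitone_pow_mulVec_indicator hC hS hl i).trans_lt hk⟩
  · exact Eventually.of_forall fun _ h => absurd h hi

/-- With `p = ∑_{k < m} Cᵏ 𝟙_S` (the expected time spent in `S` during the first `m` steps),
`C p = p - 𝟙_S + Cᵐ 𝟙_S`, which is `< p` on `S` once `m` is large. -/
theorem exists_lyapunov_weights (hC : C ∈ rowStochastic ℝ ι)
    (hS : ∀ i j, i ∉ S → j ∈ S → C i j = 0)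
    (hreach : ∀ i ∈ S, ∃ k, ∃ j ∉ S, 0 < (C ^ k) i j) :
    ∃ p : ι → ℝ, ∃ θ < (1 : ℝ), S.indicator 1 ≤ p ∧ (∀ i ∉ S, p i = 0) ∧ C *ᵥ p ≤ θ • p := by
  obtain ⟨m, hm1, hm⟩ := exists_pow_mulVec_indicator_lt_one hC hS hreach
  set u : ℕ → ι → ℝ := fun k => C ^ k *ᵥ S.indicator 1 with hu
  set p := ∑ k ∈ range m, u k
  have hp_out (i : ι) (hi : i ∉ S) : p i = 0 := by
    simp [p, hu, pow_mulVec_indicator_apply_eq_zero hS _ i hi]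
  have hCp : C *ᵥ p = p - S.indicator 1 + u m := by
    have := sum_range_succ' u m
    rw [sum_range_succ] at this
    simp only [p, mulVec_sum, hu, mulVec_mulVec, ← pow_succ']
    rw [eq_sub_of_add_eq this.symm]
    simp only [hu, pow_zero, one_mulVec]
    abel
  have hep : S.indicator 1 ≤ p := by
    simpa [hu] using single_le_sum (f := u) (fun k _ => nonneg_mulVec_of_mem_rowStochastic
      (pow_mem hC k) (Set.indicator_nonneg fun _ _ => zero_le_one)) (mem_range.2 hm1)
  have hθ : ∀ᶠ θ in 𝓝[<] (1 : ℝ), ∀ i, (C *ᵥ p) i ≤ θ * p i := by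
    refine eventually_all.2 fun i => ?_
    by_cases hi : i ∈ S
    · have hlt : (C *ᵥ p) i < 1 * p i := by
        have := hm i hi
        simp only [hCp, Pi.add_apply, Pi.sub_apply, Set.indicator_of_mem hi, Pi.one_apply]
        linarith
      exact ((tendsto_id.mul_const (p i)).mono_left nhdsWithin_le_nhds).eventually_const_lt hlt
        |>.mono fun _ h => h.le
    · exact Eventually.of_forall fun θ => by
        simp [mulVec_apply_eq_zero_of_notMem hS hp_out hi, hp_out i hi]
  obtain ⟨θ, hθ, hθ1⟩ := (hθ.and self_mem_nhdsWithin).exists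
  exact ⟨p, θ, hθ1, hep, hp_out, hθ⟩

end Matrix

lemma exists_pos_le_mul_pow_of_antitone {L : ℕ → ℝ} {ρ : ℝ} (hρ0 : 0 < ρ) (hρ1 : ρ ≤ 1)
    (hL : Antitone L) (hL0 : 0 ≤ L 0) {t₀ : ℕ} (hc : ∀ t, t₀ ≤ t → L (t + 1) ≤ ρ * L t) :
    ∃ K > 0, ∀ t, L t ≤ K * ρ ^ t := by
  have hshift (t : ℕ) : L t ≤ ρ ^ (t - t₀) * L 0 := by
    induction t with
    | zero => simp
    | succ t ih =>
      rcases le_or_gt t₀ t with ht | ht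
      · rw [Nat.sub_add_comm ht, pow_succ', mul_assoc]
        exact (hc t ht).trans (mul_le_mul_of_nonneg_left ih hρ0.le)
      · rw [Nat.sub_eq_zero_of_le ht, pow_zero, one_mul]
        exact hL (Nat.zero_le _)
  refine ⟨(L 0 + 1) / ρ ^ t₀, by positivity, fun t => ?_⟩
  calc L t ≤ ρ ^ (t - t₀) * (L 0 + 1) := (hshift t).trans (by gcongr; linarith)
    _ = (L 0 + 1) / ρ ^ t₀ * ρ ^ (t - t₀ + t₀) := by
        rw [pow_add]; field_simp
    _ ≤ (L 0 + 1) / ρ ^ t₀ * ρ ^ t :=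
        mul_le_mul_of_nonneg_left (pow_le_pow_of_le_one hρ0.le hρ1 (by omega)) (by positivity)

section Simplex

variable {n : ℕ} {C : Matrix (Fin n) (Fin n) ℝ} {x : Fin n → ℝ}

lemma IsRIM.mem_rowStochastic (hC : IsRIM C) : C ∈ rowStochastic ℝ (Fin n) :=
  mem_rowStochastic_iff_sum.2 ⟨hC.1, hC.2.1⟩

lemma le_one_of_mem_simplex (hx : x ∈ simplex n) (i : Fin n) : x i ≤ 1 :=
  hx.2 ▸ single_le_sum (fun j _ => hx.1 j) (mem_univ i)

lemma sub_sq_nonneg_of_mem_simplex (hx : x ∈ simplex n) : 0 ≤ x - x ^ 2 := fun i => by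
  have := hx.1 i
  have := le_one_of_mem_simplex hx i
  simp only [Pi.zero_apply, Pi.sub_apply, Pi.pow_apply]
  nlinarith

lemma lt_one_iff_exists_pos (hx : x ∈ simplex n) {i : Fin n} :
    x i < 1 ↔ ∃ j ≠ i, 0 < x j := by
  rw [← hx.2, ← add_sum_erase _ _ (mem_univ i), lt_add_iff_pos_right,
    sum_pos_iff_of_nonneg fun j _ => hx.1 j]
  simp

lemma eq_vertex_of_apply_eq_one (hx : x ∈ simplex n) {i : Fin n} (hi : x i = 1) :
    x = vertex n i := by
  have hzero : ∀ j ≠ i, x j ≤ 0 := by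
    simpa [hi] using (lt_one_iff_exists_pos hx (i := i)).not
  funext j
  by_cases hj : j = i
  · simp [vertex, hj, hi]
  · simp [vertex, hj, le_antisymm (hzero j hj) (hx.1 j)]

lemma DF_eq_vecMul_add (C : Matrix (Fin n) (Fin n) ℝ) (x : Fin n → ℝ) :
    DF C x = (x - x ^ 2) ᵥ* C + x ^ 2 := by
  ext i
  simp [DF, vecMul, dotProduct, mul_comm]

lemma DF_vertex (C : Matrix (Fin n) (Fin n) ℝ) (i : Fin n) : DF C (vertex n i) = vertex n i := by
  have hsq : vertex n i ^ 2 = vertex n i := by ext j; by_cases hj : j = i <;> simp [vertex, hj]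
  rw [DF_eq_vecMul_add, hsq, sub_self, zero_vecMul, zero_add]

lemma dotProduct_DF_le {p : Fin n → ℝ} {θ : ℝ} (hp : C *ᵥ p ≤ θ • p) (hx : 0 ≤ x - x ^ 2) :
    p ⬝ᵥ DF C x ≤ p ⬝ᵥ x - (1 - θ) * (p ⬝ᵥ (x - x ^ 2)) :=
  calc p ⬝ᵥ DF C x = (x - x ^ 2) ⬝ᵥ (C *ᵥ p) + p ⬝ᵥ x ^ 2 := by
        rw [DF_eq_vecMul_add, dotProduct_add, dotProduct_comm p, dotProduct_mulVec]
    _ ≤ (x - x ^ 2) ⬝ᵥ (θ • p) + p ⬝ᵥ x ^ 2 := by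
        gcongr
        exact dotProduct_le_dotProduct_of_nonneg_left hp hx
    _ = _ := by
        simp only [dotProduct_smul, dotProduct_sub, smul_eq_mul, dotProduct_comm _ p]
        ring

lemma dotProduct_DF_le_mul {S : Set (Fin n)} {p : Fin n → ℝ} {θ : ℝ} (hθ : θ ≤ 1) (hp : 0 ≤ p)
    (hpS : ∀ i ∉ S, p i = 0) (hCp : C *ᵥ p ≤ θ • p) (hx : x ∈ simplex n) :
    p ⬝ᵥ DF C x ≤ (1 - (1 - θ) * (1 - S.indicator 1 ⬝ᵥ x)) * (p ⬝ᵥ x) := by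
  have hstep := dotProduct_DF_le hCp (sub_sq_nonneg_of_mem_simplex hx)
  have hsq := dotProduct_sq_le hp hpS hx.1
  rw [dotProduct_sub] at hstep
  nlinarith

variable (hC : C ∈ rowStochastic ℝ (Fin n))
include hC

lemma DF_mem_simplex (hx : x ∈ simplex n) : DF C x ∈ simplex n := by
  refine ⟨fun i => ?_, ?_⟩
  · rw [DF_eq_vecMul_add]
    exact add_nonneg (nonneg_vecMul_of_mem_rowStochastic hC (sub_sq_nonneg_of_mem_simplex hx) i)
      (sq_nonneg _)
  · rw [← dotProduct_one, DF_eq_vecMul_add, add_dotProduct, ← dotProduct_mulVec,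
      one_vecMul_of_mem_rowStochastic hC, ← add_dotProduct, sub_add_cancel, dotProduct_one, hx.2]

lemma DF_pos_of_pos (hx : x ∈ simplex n) {i : Fin n} (hi : 0 < x i) : 0 < DF C x i := by
  rw [DF_eq_vecMul_add]
  exact add_pos_of_nonneg_of_pos
    (nonneg_vecMul_of_mem_rowStochastic hC (sub_sq_nonneg_of_mem_simplex hx) i)
    (by simpa using pow_pos hi 2)

lemma DF_pos_of_edge (hx : x ∈ simplex n) {i j : Fin n} (hj0 : 0 < x j) (hj1 : x j < 1)
    (hji : 0 < C j i) : 0 < DF C x i := by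
  have hy := sub_sq_nonneg_of_mem_simplex hx
  have hyj : 0 < x j - x j ^ 2 := by nlinarith
  rw [DF_eq_vecMul_add]
  refine add_pos_of_pos_of_nonneg ?_ (by simp [sq_nonneg])
  calc 0 < (x j - x j ^ 2) * C j i := mul_pos hyj hji
    _ ≤ ((x - x ^ 2) ᵥ* C) i :=
      single_le_sum (f := fun l => (x - x ^ 2) l * C l i)
        (fun l _ => mul_nonneg (hy l) (hC.1 l i)) (mem_univ j)

lemma DF_lt_one (hx : x ∈ simplex n) {i : Fin n} (hi : x i < 1) : DF C x i < 1 := by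
  obtain ⟨j, hji, hj⟩ := (lt_one_iff_exists_pos hx).1 hi
  exact (lt_one_iff_exists_pos (DF_mem_simplex hC hx)).2 ⟨j, hji, DF_pos_of_pos hC hx hj⟩

end Simplex

section Orbit

variable {n : ℕ} {C : Matrix (Fin n) (Fin n) ℝ} (hC : C ∈ rowStochastic ℝ (Fin n))
  {x : ℕ → Fin n → ℝ} (hx : ∀ t, x (t + 1) = DF C (x t)) (hx0 : x 0 ∈ simplex n)
include hC hx hx0

lemma orbit_mem_simplex (t : ℕ) : x t ∈ simplex n := by
  induction t with
  | zero => exact hx0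
  | succ t ih => rw [hx t]; exact DF_mem_simplex hC ih

lemma orbit_lt_one (hv : ∀ i, x 0 ≠ vertex n i) (t : ℕ) (i : Fin n) : x t i < 1 := by
  induction t generalizing i with
  | zero =>
    exact (le_one_of_mem_simplex hx0 i).lt_of_ne fun h => hv i (eq_vertex_of_apply_eq_one hx0 h)
  | succ t ih => rw [hx t]; exact DF_lt_one hC (orbit_mem_simplex hC hx hx0 t) (ih i)

lemma orbit_pos_of_pow_pos (hv : ∀ i, x 0 ≠ vertex n i) {t : ℕ} {j : Fin n} (hj : 0 < x t j)
    (k : ℕ) {i : Fin n} (hk : 0 < (C ^ k) j i) : 0 < x (t + k) i := by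
  induction k generalizing i with
  | zero =>
    obtain rfl : j = i := by by_contra h; simp [one_apply_ne h] at hk
    exact hj
  | succ k ih =>
    have hnn (l : Fin n) : 0 ≤ (C ^ k) j l := (pow_mem hC k).1 j l
    rw [pow_succ, mul_apply, sum_pos_iff_of_nonneg fun l _ => mul_nonneg (hnn l) (hC.1 l i)] at hk
    obtain ⟨l, -, hl⟩ := hk
    rw [← add_assoc, hx]
    exact DF_pos_of_edge hC (orbit_mem_simplex hC hx hx0 _) (ih (pos_of_mul_pos_left hl (hC.1 l i)))
      (orbit_lt_one hC hx hx0 hv _ l) (pos_of_mul_pos_right hl (hnn l))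

lemma exists_orbit_apply_pos (hv : ∀ i, x 0 ≠ vertex n i) {i : Fin n}
    (hreach : ∀ j, ∃ k, 0 < (C ^ k) j i) : ∃ t, 0 < x t i := by
  obtain ⟨j, -, hj⟩ := (sum_pos_iff_of_nonneg fun j _ => hx0.1 j).1 (hx0.2 ▸ one_pos)
  obtain ⟨k, hk⟩ := hreach j
  exact ⟨0 + k, orbit_pos_of_pow_pos hC hx hx0 hv hj k hk⟩

end Orbit

section Reachability

variable {n : ℕ} {C : Matrix (Fin n) (Fin n) ℝ}

lemma GloballyReachable.exists_pow_pos {i : Fin n} (hi : GloballyReachable C i) (j : Fin n) :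
    ∃ k, 0 < (C ^ k) j i := by
  by_cases hji : j = i
  · exact ⟨0, by simp [hji]⟩
  · obtain ⟨k, -, hk⟩ := hi j hji
    exact ⟨k, hk⟩

lemma GloballyReachable.of_pos (hC : C ∈ rowStochastic ℝ (Fin n)) {i j : Fin n}
    (hi : GloballyReachable C i) (hij : 0 < C i j) : GloballyReachable C j := by
  intro l _
  by_cases hli : l = i
  · exact ⟨1, le_rfl, by simpa [hli] using hij⟩
  · obtain ⟨k, -, hk⟩ := hi l hli
    refine ⟨k + 1, by omega, ?_⟩
    rw [pow_succ, mul_apply]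
    exact (mul_pos hk hij).trans_le <| single_le_sum (f := fun m => (C ^ k) l m * C m j)
      (fun m _ => mul_nonneg ((pow_mem hC k).1 l m) (hC.1 m j)) (mem_univ i)

lemma apply_eq_zero_of_globallyReachable (hC : C ∈ rowStochastic ℝ (Fin n)) {i j : Fin n}
    (hi : GloballyReachable C i) (hj : ¬ GloballyReachable C j) : C i j = 0 :=
  (not_lt.1 fun h => hj (hi.of_pos hC h)).antisymm (hC.1 i j)

end Reachability

section TwoNodeClass

variable {n : ℕ} {C : Matrix (Fin (n + 2)) (Fin (n + 2)) ℝ}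

def transientNodes (n : ℕ) : Set (Fin (n + 2)) := {i | 2 ≤ (i : ℕ)}

lemma pt_zero (α : ℝ) : pt (n + 2) α 0 = α := by simp [pt]

lemma pt_one (α : ℝ) : pt (n + 2) α 1 = 1 - α := by simp [pt]

lemma pt_succ_succ (α : ℝ) (j : Fin n) : pt (n + 2) α j.succ.succ = 0 := by simp [pt]

lemma mem_transientNodes_iff {i : Fin (n + 2)} : i ∈ transientNodes n ↔ i ≠ 0 ∧ i ≠ 1 := by
  simp only [transientNodes, Set.mem_ofPred_eq, ne_eq, Fin.ext_iff, Fin.val_zero, Fin.val_one]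
  omega

lemma sum_eq_add_add_indicator_dotProduct (v : Fin (n + 2) → ℝ) :
    ∑ i, v i = v 0 + v 1 + (transientNodes n).indicator 1 ⬝ᵥ v := by
  simp [Fin.sum_univ_succ, dotProduct, transientNodes, Set.indicator, add_assoc]

lemma eq_pt_of_forall_transient_eq_zero {x : Fin (n + 2) → ℝ} (hx : x ∈ simplex (n + 2))
    (h : ∀ i ∈ transientNodes n, x i = 0) : x = pt (n + 2) (x 0) := by
  have hmass : (transientNodes n).indicator 1 ⬝ᵥ x = 0 :=
    sum_eq_zero fun i _ => by by_cases hi : i ∈ transientNodes n <;> simp [hi, h]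
  have hsum := sum_eq_add_add_indicator_dotProduct x
  rw [hx.2, hmass] at hsum
  funext i
  induction i using Fin.cases with
  | zero => rw [pt_zero]
  | succ i =>
    induction i using Fin.cases with
    | zero => rw [Fin.succ_zero_eq_one, pt_one]; linarith
    | succ j => rw [pt_succ_succ]; exact h _ (by simp [transientNodes])

lemma apply_zero_one_eq_one_of_globallyReachable_iff (hC : IsRIM C)
    (hgr : ∀ i : Fin (n + 2), GloballyReachable C i ↔ (i : ℕ) < 2) : C 0 1 = 1 ∧ C 1 0 = 1 := by
  have hT (i j : Fin (n + 2)) (hi : (i : ℕ) < 2) (hj : j ∈ transientNodes n) : C i j = 0 :=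
    apply_eq_zero_of_globallyReachable hC.mem_rowStochastic ((hgr i).2 hi)
      fun h => (not_lt.2 hj) ((hgr j).1 h)
  constructor <;> refine apply_eq_one_of_forall_ne hC.mem_rowStochastic fun j hj => ?_
  · by_cases hj0 : j = 0
    · exact hj0 ▸ hC.2.2 0
    · exact hT 0 j (by simp) (mem_transientNodes_iff.2 ⟨hj0, hj⟩)
  · by_cases hj1 : j = 1
    · exact hj1 ▸ hC.2.2 1
    · exact hT 1 j (by simp) (mem_transientNodes_iff.2 ⟨hj, hj1⟩)

lemma abs_DF_apply_zero_sub_le (hC : IsRIM C) (h10 : C 1 0 = 1) {x : Fin (n + 2) → ℝ}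
    (hx : x ∈ simplex (n + 2)) :
    |DF C x 0 - x 0| ≤ 2 * ((transientNodes n).indicator 1 ⬝ᵥ x) := by
  set e := (transientNodes n).indicator (1 : Fin (n + 2) → ℝ)
  have he : 0 ≤ e := Set.indicator_nonneg fun _ _ => zero_le_one
  have hy := sub_sq_nonneg_of_mem_simplex hx
  set r := e ⬝ᵥ fun j => C j 0 * (x j - x j ^ 2)
  have hr0 : 0 ≤ r := dotProduct_nonneg_of_nonneg he fun j => mul_nonneg (hC.1 j 0) (hy j)
  have hr1 : r ≤ e ⬝ᵥ x := by
    refine dotProduct_le_dotProduct_of_nonneg_left (fun j => ?_) he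
    have := le_one_of_mem_rowStochastic hC.mem_rowStochastic (i := j) (j := 0)
    have := hy j
    simp only [Pi.sub_apply, Pi.pow_apply, Pi.zero_apply] at this
    nlinarith [hx.1 j, hC.1 j 0]
  have hsum := sum_eq_add_add_indicator_dotProduct x
  rw [hx.2] at hsum
  -- `(x₁ - x₁²) - (x₀ - x₀²) = (x₁ - x₀)(1 - x₀ - x₁)`, and `1 - x₀ - x₁` is the mass on `S`
  have hDF : DF C x 0 - x 0 = (x 1 - x 0) * (e ⬝ᵥ x) + r := by
    simp only [DF]
    rw [sum_eq_add_add_indicator_dotProduct, hC.2.2, h10]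
    linear_combination (x 1 - x 0) * hsum
  rw [hDF, abs_le]
  have := hx.1 0
  have := hx.1 1
  constructor <;> nlinarith

variable (hC : IsRIM C) (h01 : C 0 1 = 1) (h10 : C 1 0 = 1)
include hC h01 h10

lemma transientNodes_closed (i j : Fin (n + 2)) (hi : i ∉ transientNodes n)
    (hj : j ∈ transientNodes n) : C i j = 0 := by
  rw [mem_transientNodes_iff, not_and_or, not_not, not_not] at hi
  rw [mem_transientNodes_iff] at hj
  rcases hi with rfl | rfl
  · exact apply_eq_zero_of_apply_eq_one hC.mem_rowStochastic h01 hj.2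
  · exact apply_eq_zero_of_apply_eq_one hC.mem_rowStochastic h10 hj.1

theorem DF_pt (α : ℝ) : DF C (pt (n + 2) α) = pt (n + 2) α := by
  have hT (i : Fin (n + 2)) (hi : i ∉ transientNodes n) (j : Fin n) : C i j.succ.succ = 0 :=
    transientNodes_closed hC h01 h10 i _ hi (by simp [transientNodes])
  funext i
  simp only [DF, Fin.sum_univ_succ, Fin.succ_zero_eq_one, pt_zero, pt_one, pt_succ_succ,
    zero_pow two_ne_zero, sub_zero, mul_zero, sum_const_zero, add_zero]
  induction i using Fin.cases with
  | zero => rw [hC.2.2, h10, pt_zero]; ring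
  | succ i =>
    induction i using Fin.cases with
    | zero => rw [Fin.succ_zero_eq_one, hC.2.2, h01, pt_one]; ring
    | succ j =>
      rw [hT 0 (by simp [transientNodes]), hT 1 (by simp [transientNodes]), pt_succ_succ]
      ring

lemma indicator_dotProduct_DF_le {x : Fin (n + 2) → ℝ} (hx : x ∈ simplex (n + 2)) :
    (transientNodes n).indicator 1 ⬝ᵥ DF C x ≤ (transientNodes n).indicator 1 ⬝ᵥ x := by
  have hCe : C *ᵥ (transientNodes n).indicator 1 ≤ (1 : ℝ) • (transientNodes n).indicator 1 := by
    rw [one_smul]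
    exact mulVec_indicator_le hC.mem_rowStochastic (transientNodes_closed hC h01 h10)
  simpa using dotProduct_DF_le_mul (p := (transientNodes n).indicator 1) le_rfl
    (Set.indicator_nonneg fun _ _ => zero_le_one) (fun i hi => Set.indicator_of_notMem hi _) hCe hx

variable (hreach : ∀ j, ∃ k, 0 < (C ^ k) j 0)
include hreach

lemma exists_transient_lyapunov_weights :
    ∃ p : Fin (n + 2) → ℝ, ∃ θ < (1 : ℝ), (transientNodes n).indicator 1 ≤ p ∧
      (∀ i ∉ transientNodes n, p i = 0) ∧ C *ᵥ p ≤ θ • p :=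
  exists_lyapunov_weights hC.mem_rowStochastic (transientNodes_closed hC h01 h10)
    fun i _ => let ⟨k, hk⟩ := hreach i; ⟨k, 0, by simp [transientNodes], hk⟩

lemma apply_eq_zero_or_one_of_DF_eq_self {x : Fin (n + 2) → ℝ} (hx : x ∈ simplex (n + 2))
    (hfix : DF C x = x) {i : Fin (n + 2)} (hi : i ∈ transientNodes n) : x i = 0 ∨ x i = 1 := by
  obtain ⟨p, θ, hθ, hep, -, hCp⟩ := exists_transient_lyapunov_weights hC h01 h10 hreach
  have hy := sub_sq_nonneg_of_mem_simplex hx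
  have hp : 0 ≤ p := fun j => (Set.indicator_nonneg (fun _ _ => zero_le_one) j).trans (hep j)
  have hpy : p ⬝ᵥ (x - x ^ 2) ≤ 0 := by
    have := dotProduct_DF_le hCp hy
    rw [hfix] at this
    exact nonpos_of_mul_nonpos_right (by linarith) (sub_pos.2 hθ)
  have hterm := (sum_eq_zero_iff_of_nonneg fun j _ => mul_nonneg (hp j) (hy j)).1
    (hpy.antisymm (dotProduct_nonneg_of_nonneg hp hy)) i (mem_univ i)
  have hpi : 1 ≤ p i := by simpa [hi] using hep i
  have : x i * (1 - x i) = 0 := by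
    rcases mul_eq_zero.1 hterm with h | h
    · linarith
    · simp only [Pi.sub_apply, Pi.pow_apply] at h; linear_combination h
  rcases mul_eq_zero.1 this with h | h
  · exact Or.inl h
  · exact Or.inr (by linarith)

theorem DF_eq_self_iff {x : Fin (n + 2) → ℝ} (hx : x ∈ simplex (n + 2)) :
    DF C x = x ↔ (∃ α ∈ Set.Icc (0 : ℝ) 1, x = pt (n + 2) α) ∨
      ∃ i : Fin (n + 2), 2 ≤ (i : ℕ) ∧ x = vertex (n + 2) i := by
  constructor
  · intro hfix
    by_cases hone : ∃ i ∈ transientNodes n, x i = 1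
    · obtain ⟨i, hi, hxi⟩ := hone
      exact Or.inr ⟨i, hi, eq_vertex_of_apply_eq_one hx hxi⟩
    · push Not at hone
      refine Or.inl ⟨x 0, ⟨hx.1 0, le_one_of_mem_simplex hx 0⟩, eq_pt_of_forall_transient_eq_zero hx
        fun i hi => ?_⟩
      exact (apply_eq_zero_or_one_of_DF_eq_self hC h01 h10 hreach hx hfix hi).resolve_right
        (hone i hi)
  · rintro (⟨α, -, rfl⟩ | ⟨i, -, rfl⟩)
    · exact DF_pt hC h01 h10 α
    · exact DF_vertex C i

variable {x : ℕ → Fin (n + 2) → ℝ} (hx : ∀ t, x (t + 1) = DF C (x t))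
  (hx0 : x 0 ∈ simplex (n + 2)) (hv : ∀ i, x 0 ≠ vertex (n + 2) i)
include hx hx0 hv

theorem exists_indicator_dotProduct_le_geometric :
    ∃ K > 0, ∃ ρ ∈ Set.Ioo (0 : ℝ) 1, ∀ t, (transientNodes n).indicator 1 ⬝ᵥ x t ≤ K * ρ ^ t := by
  obtain ⟨p, θ, hθ, hep, hp_out, hCp⟩ := exists_transient_lyapunov_weights hC h01 h10 hreach
  set e := (transientNodes n).indicator (1 : Fin (n + 2) → ℝ)
  have he : 0 ≤ e := Set.indicator_nonneg fun _ _ => zero_le_one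
  have hp : 0 ≤ p := fun j => (he j).trans (hep j)
  have hmem := orbit_mem_simplex hC.mem_rowStochastic hx hx0
  set s := fun t => e ⬝ᵥ x t
  set L := fun t => p ⬝ᵥ x t
  have hs1 (t : ℕ) : s t ≤ 1 := by
    have := sum_eq_add_add_indicator_dotProduct (x t)
    linarith [(hmem t).2, (hmem t).1 0, (hmem t).1 1]
  have hs_anti : Antitone s := antitone_nat_of_succ_le fun t => by
    simpa [s, hx] using indicator_dotProduct_DF_le hC h01 h10 (hmem t)
  have hL_step (t : ℕ) : L (t + 1) ≤ (1 - (1 - θ) * (1 - s t)) * L t := by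
    simpa [L, s, hx] using dotProduct_DF_le_mul hθ.le hp hp_out hCp (hmem t)
  have hL0 (t : ℕ) : 0 ≤ L t := dotProduct_nonneg_of_nonneg hp (hmem t).1
  have hL_anti : Antitone L := antitone_nat_of_succ_le fun t => (hL_step t).trans <|
    mul_le_of_le_one_left (hL0 t) (by nlinarith [hs1 t])
  obtain ⟨t₀, ht₀⟩ : ∃ t₀, s t₀ < 1 := by
    obtain ⟨t₀, ht₀⟩ := exists_orbit_apply_pos hC.mem_rowStochastic hx hx0 hv hreach
    have := sum_eq_add_add_indicator_dotProduct (x t₀)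
    exact ⟨t₀, by linarith [(hmem t₀).2, (hmem t₀).1 1]⟩
  set ρ := max (1 - (1 - θ) * (1 - s t₀)) (1 / 2)
  have hρ : ρ ∈ Set.Ioo (0 : ℝ) 1 :=
    ⟨lt_max_of_lt_right one_half_pos, max_lt (by nlinarith) one_half_lt_one⟩
  have hcontr (t : ℕ) (ht : t₀ ≤ t) : L (t + 1) ≤ ρ * L t := by
    refine (hL_step t).trans (mul_le_mul_of_nonneg_right (le_trans ?_ (le_max_left _ _)) (hL0 t))
    nlinarith [hs_anti ht]
  obtain ⟨K, hK, hLK⟩ := exists_pos_le_mul_pow_of_antitone hρ.1 hρ.2.le hL_anti (hL0 0) hcontr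
  exact ⟨K, hK, ρ, hρ, fun t =>
    (dotProduct_le_dotProduct_of_nonneg_right hep (hmem t).1).trans (hLK t)⟩

theorem exists_norm_sub_pt_le_geometric :
    ∃ α ∈ Set.Icc (0 : ℝ) 1, ∃ M > (0 : ℝ), ∃ ρ ∈ Set.Ioo (0 : ℝ) 1,
      ∀ t, ‖x t - pt (n + 2) α‖ ≤ M * ρ ^ t := by
  obtain ⟨K, hK, ρ, hρ, hs⟩ := exists_indicator_dotProduct_le_geometric hC h01 h10 hreach hx hx0 hv
  have hmem := orbit_mem_simplex hC.mem_rowStochastic hx hx0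
  have hstep (t : ℕ) : dist (x t 0) (x (t + 1) 0) ≤ 2 * K * ρ ^ t := by
    rw [Real.dist_eq, abs_sub_comm, hx, mul_assoc]
    exact (abs_DF_apply_zero_sub_le hC h10 (hmem t)).trans (by linarith [hs t])
  obtain ⟨α, hα⟩ := cauchySeq_tendsto_of_complete (cauchySeq_of_le_geometric ρ _ hρ.2 hstep)
  have hα_mem : α ∈ Set.Icc (0 : ℝ) 1 := isClosed_Icc.mem_of_tendsto hα
    (Eventually.of_forall fun t => ⟨(hmem t).1 0, le_one_of_mem_simplex (hmem t) 0⟩)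
  have hKρ : 0 < 2 * K / (1 - ρ) := div_pos (by linarith) (sub_pos.2 hρ.2)
  refine ⟨α, hα_mem, 2 * K / (1 - ρ) + K, by linarith, ρ, hρ, fun t => ?_⟩
  have h0 : |x t 0 - α| ≤ 2 * K / (1 - ρ) * ρ ^ t := by
    rw [← Real.dist_eq, div_mul_eq_mul_div]
    exact dist_le_of_le_geometric_of_tendsto ρ _ hρ.2 hstep hα t
  have hsum := sum_eq_add_add_indicator_dotProduct (x t)
  have hst := hs t
  have hs0 : 0 ≤ (transientNodes n).indicator 1 ⬝ᵥ x t :=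
    dotProduct_nonneg_of_nonneg (Set.indicator_nonneg fun _ _ => zero_le_one) (hmem t).1
  have hA : 0 ≤ 2 * K / (1 - ρ) * ρ ^ t := mul_nonneg hKρ.le (pow_nonneg hρ.1.le t)
  refine (pi_norm_le_iff_of_nonneg (by nlinarith [pow_nonneg hρ.1.le t])).2 fun i => ?_
  rw [Pi.sub_apply, Real.norm_eq_abs]
  induction i using Fin.cases with
  | zero => rw [pt_zero]; linarith
  | succ i =>
    induction i using Fin.cases with
    | zero =>
      rw [Fin.succ_zero_eq_one, pt_one]
      rw [abs_le] at h0 ⊢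
      constructor <;> linarith [(hmem t).2]
    | succ j =>
      have := apply_le_indicator_dotProduct (hmem t).1 (S := transientNodes n) (i := j.succ.succ)
        (by simp [transientNodes])
      rw [pt_succ_succ, sub_zero, abs_of_nonneg ((hmem t).1 _)]
      linarith

end TwoNodeClass

theorem stmt10_general {n : ℕ} (hn : 3 ≤ n) (C : Matrix (Fin n) (Fin n) ℝ) (hC : IsRIM C)
    (hgr : ∀ i : Fin n, GloballyReachable C i ↔ (i : ℕ) < 2) :
    (∀ α ∈ Set.Icc (0 : ℝ) 1, DF C (pt n α) = pt n α) ∧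
    (∀ x ∈ simplex n,
      (DF C x = x ↔
        (∃ α ∈ Set.Icc (0 : ℝ) 1, x = pt n α) ∨
        (∃ i : Fin n, 2 ≤ (i : ℕ) ∧ x = vertex n i))) ∧
    (∀ x : ℕ → Fin n → ℝ, x 0 ∈ simplex n → (∀ i, x 0 ≠ vertex n i) →
      (∀ t, x (t + 1) = DF C (x t)) →
      ∃ α ∈ Set.Icc (0 : ℝ) 1, ∃ M > (0 : ℝ), ∃ ρ ∈ Set.Ioo (0 : ℝ) 1,
        ∀ t, ‖x t - pt n α‖ ≤ M * ρ ^ t) := by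
  obtain ⟨n, rfl⟩ : ∃ m, n = m + 2 := ⟨n - 2, by omega⟩
  obtain ⟨h01, h10⟩ := apply_zero_one_eq_one_of_globallyReachable_iff hC hgr
  have hreach := ((hgr 0).2 (by simp)).exists_pow_pos
  exact ⟨fun α _ => DF_pt hC h01 h10 α, fun x hx => DF_eq_self_iff hC h01 h10 hreach hx,
    fun x hx0 hv hx => exists_norm_sub_pt_le_geometric hC h01 h10 hreach hx hx0 hv⟩

theorem stmt10 {n : ℕ} (hn : 3 ≤ n) (C : Matrix (Fin n) (Fin n) ℝ) (hC : IsRIM C)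
    (hred : ¬ Irred C)
    (hgr : ∀ i : Fin n, GloballyReachable C i ↔ (i : ℕ) < 2) :
    (∀ α ∈ Set.Icc (0 : ℝ) 1, DF C (pt n α) = pt n α) ∧
    (∀ x ∈ simplex n,
      (DF C x = x ↔
        (∃ α ∈ Set.Icc (0 : ℝ) 1, x = pt n α) ∨
        (∃ i : Fin n, 2 ≤ (i : ℕ) ∧ x = vertex n i))) ∧
    (∀ x : ℕ → Fin n → ℝ, x 0 ∈ simplex n → (∀ i, x 0 ≠ vertex n i) →
      (∀ t, x (t + 1) = DF C (x t)) →
      ∃ α ∈ Set.Icc (0 : ℝ) 1, ∃ M > (0 : ℝ), ∃ ρ ∈ Set.Ioo (0 : ℝ) 1,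
        ∀ t, ‖x t - pt n α‖ ≤ M * ρ ^ t) :=
  stmt10_general hn C hC hgr
end
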